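/- arXiv:1904.09284 — 8 statements merged into one kernel-verified Lean document; each statement's English description precedes it below -/
import Mathlib

section
/- If n balls are thrown independently and uniformly at random into n bins, and N_k denotes the total number of balls in the k most loaded bins, then for sufficiently large n and any k ≤ n/2, the expectation of N_k is at least 1.5k. -/
/-!
Fix a set `S` of `m` balls and let `B` be the set of bins they hit. When `#B ≤ k`, the `k` most
loaded bins hold at least the balls landing in `B`, and each ball outside `S` lands in `B` with
probability `1 - (1 - 1/n)^m`; so, up to the event `#B > k`, `E[N_k] ≥ n - (n - m)(1 - 1/n)^m`.
For `k ≤ 3n/8` take `m = k`, so that `#B ≤ k` always. For larger `k` take `m ≈ 6k/5`: then the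
expected number of bins missed by `S` exceeds `n - k` by `n/200`, while the events "bin `b` is
missed" are negatively correlated, so the number of missed bins has variance at most `n/4`.
Chebyshev's inequality then costs at most `10^4` balls, negligible against `E[N_k] - 1.5k = Ω(n)`.
-/

open Finset

/-- The number of balls in the `k` most loaded bins, when the balls-to-bins
assignment is `ω : Fin n → Fin n`: the maximum, over all `k`-sets of bins,
of the total load of those bins. -/
def ballsInTopBins (n k : ℕ) (ω : Fin n → Fin n) : ℕ :=
  (Finset.univ.powersetCard k).sup
    (fun T => ∑ b ∈ T, (Finset.univ.filter (fun i => ω i = b)).card)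

theorem sub_pow_mul_pow_sub {q : ℝ} (c : ℝ) (hq : q ≠ 0) {m p : ℕ} (hm : m ≤ p) :
    (q - c) ^ m * q ^ (p - m) = q ^ p * (1 - c / q) ^ m := by
  obtain ⟨r, rfl⟩ := Nat.exists_eq_add_of_le hm
  rw [Nat.add_sub_cancel_left, pow_add, mul_comm (q ^ m), mul_assoc, ← mul_pow, mul_one_sub,
    mul_div_cancel₀ _ hq, mul_comm]

section Counting

variable {α β : Type*} [Fintype α] [DecidableEq α] [Fintype β] [DecidableEq β]

theorem card_filter_forall_apply_mem (S : Finset α) (t : α → Finset β) :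
    #{ω : α → β | ∀ j ∈ S, ω j ∈ t j} =
      (∏ j ∈ S, #(t j)) * Fintype.card β ^ (Fintype.card α - #S) := by
  have : ({ω : α → β | ∀ j ∈ S, ω j ∈ t j} : Finset _) =
      Fintype.piFinset fun j => if j ∈ S then t j else univ := by
    ext ω
    simp only [mem_filter, mem_univ, true_and, Fintype.mem_piFinset]
    refine forall_congr' fun j => ?_
    split_ifs <;> simp [*]
  rw [this, Fintype.card_piFinset, prod_congr rfl fun j _ => apply_ite card .., prod_ite,
    filter_mem_eq_inter, univ_inter, prod_const, card_univ, filter_not, filter_mem_eq_inter,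
    univ_inter, ← compl_eq_univ_sdiff, card_compl]

theorem card_filter_forall_apply_notMem (S : Finset α) (C : Finset β) :
    #{ω : α → β | ∀ j ∈ S, ω j ∉ C} =
      (Fintype.card β - #C) ^ #S * Fintype.card β ^ (Fintype.card α - #S) := by
  simpa [card_compl] using card_filter_forall_apply_mem S fun _ => Cᶜ

theorem sum_card_filter_comm {γ δ : Type*} [Fintype γ] [Fintype δ] (P : γ → δ → Prop)
    [∀ x y, Decidable (P x y)] : ∑ x, #{y | P x y} = ∑ y, #{x | P x y} := by
  simp only [card_filter]
  exact sum_comm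

theorem sum_card_compl_image (S : Finset α) :
    ∑ ω : α → β, #(S.image ω)ᶜ =
      Fintype.card β *
        ((Fintype.card β - 1) ^ #S * Fintype.card β ^ (Fintype.card α - #S)) := by
  have h (ω : α → β) :
      (S.image ω)ᶜ = ({b | ∀ j ∈ S, ω j ∉ ({b} : Finset β)} : Finset β) := by
    ext b; simp
  rw [sum_congr rfl fun ω _ => congrArg card (h ω), sum_card_filter_comm]
  simp only [card_filter_forall_apply_notMem, card_singleton, sum_const, card_univ, smul_eq_mul]

theorem sum_card_compl_image_sq (S : Finset α) :
    ∑ ω : α → β, #(S.image ω)ᶜ ^ 2 =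
      Fintype.card β * ((Fintype.card β - 1) ^ #S * Fintype.card β ^ (Fintype.card α - #S)) +
        Fintype.card β * (Fintype.card β - 1) *
          ((Fintype.card β - 2) ^ #S * Fintype.card β ^ (Fintype.card α - #S)) := by
  have h (ω : α → β) : #(S.image ω)ᶜ ^ 2 =
      #({p | ∀ j ∈ S, ω j ∉ ({p.1, p.2} : Finset β)} : Finset (β × β)) := by
    rw [sq, ← card_product]
    congr 1; ext p; simp [forall_and]
  have hpair (b : β) : ∑ b', (Fintype.card β - #({b, b'} : Finset β)) ^ #S
      = (Fintype.card β - 1) ^ #S + (Fintype.card β - 1) * (Fintype.card β - 2) ^ #S := by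
    rw [← add_sum_erase _ _ (mem_univ b), pair_eq_singleton, card_singleton,
      sum_congr rfl fun b' hb' => by rw [card_pair (ne_of_mem_erase hb').symm]]
    simp [card_erase_of_mem]
  rw [sum_congr rfl fun ω _ => h ω, sum_card_filter_comm]
  simp only [card_filter_forall_apply_notMem, Fintype.sum_prod_type, ← sum_mul, hpair, sum_const,
    card_univ, smul_eq_mul]
  ring

theorem card_filter_forall_apply_ne_apply {S : Finset α} {i : α} (hi : i ∉ S) :
    #{ω : α → β | ∀ j ∈ S, ω j ≠ ω i} =
      (Fintype.card β - 1) ^ #S * Fintype.card β ^ (Fintype.card α - #S) := by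
  have hS : #S < Fintype.card α := card_lt_univ_of_notMem hi
  have hfiber (b : β) : #{ω : α → β | (∀ j ∈ S, ω j ≠ ω i) ∧ ω i = b} =
      #{ω : α → β |
        ∀ j ∈ insert i S, ω j ∈ if j = i then {b} else ({b}ᶜ : Finset β)} := by
    congr 1; ext ω
    simp only [mem_filter, mem_univ, true_and, forall_mem_insert, if_pos, mem_singleton]
    constructor
    · rintro ⟨h, rfl⟩
      exact ⟨rfl, fun j hj => by simpa [ne_of_mem_of_not_mem hj hi] using h j hj⟩
    · rintro ⟨rfl, h⟩
      exact ⟨fun j hj => by simpa [ne_of_mem_of_not_mem hj hi] using h j hj, rfl⟩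
  rw [card_eq_sum_card_fiberwise (f := fun ω : α → β => ω i) (t := univ)
    fun _ _ => mem_univ _]
  have hprod (b : β) : ∏ j ∈ S, #(if j = i then {b} else ({b}ᶜ : Finset β)) =
      (Fintype.card β - 1) ^ #S := by
    rw [prod_congr rfl fun j hj => by rw [if_neg (ne_of_mem_of_not_mem hj hi)]]
    simp [card_compl]
  simp only [filter_filter, hfiber, card_filter_forall_apply_mem, prod_insert hi, if_true,
    card_singleton, one_mul, hprod, card_insert_of_notMem hi, sum_const, card_univ, smul_eq_mul]
  rw [show Fintype.card α - #S = Fintype.card α - (#S + 1) + 1 by omega, pow_succ]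
  ring

theorem sum_card_filter_apply_notMem_image (S : Finset α) :
    ∑ ω : α → β, #{i | ω i ∉ S.image ω} =
      (Fintype.card α - #S) *
        ((Fintype.card β - 1) ^ #S * Fintype.card β ^ (Fintype.card α - #S)) := by
  have h (i : α) : #{ω : α → β | ω i ∉ S.image ω} = if i ∈ Sᶜ then
      (Fintype.card β - 1) ^ #S * Fintype.card β ^ (Fintype.card α - #S) else 0 := by
    split_ifs with hi
    · rw [← card_filter_forall_apply_ne_apply (mem_compl.1 hi)]
      simp
    · rw [card_eq_zero, filter_eq_empty_iff]
      exact fun ω _ => not_not.2 (mem_image_of_mem ω (notMem_compl.1 hi))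
  rw [sum_card_filter_comm, sum_congr rfl fun i _ => h i, sum_ite_mem, univ_inter,
    sum_const, card_compl, smul_eq_mul]

theorem sum_card_filter_mem_image (S : Finset α) (hβ : 0 < Fintype.card β) :
    ∑ ω : α → β, (#{i | ω i ∈ S.image ω} : ℝ) =
      (Fintype.card β : ℝ) ^ Fintype.card α *
        (Fintype.card α - (Fintype.card α - #S) * (1 - 1 / Fintype.card β) ^ #S) := by
  have hS : #S ≤ Fintype.card α := card_le_univ S
  have h (ω : α → β) : (#{i | ω i ∈ S.image ω} : ℝ) =
      Fintype.card α - #{i | ω i ∉ S.image ω} := by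
    rw [eq_sub_iff_add_eq]; exact_mod_cast card_filter_add_card_filter_not _
  have hsum := congrArg (Nat.cast (R := ℝ)) (sum_card_filter_apply_notMem_image (β := β) S)
  push_cast [Nat.cast_sub hS, Nat.cast_sub hβ] at hsum
  rw [sub_pow_mul_pow_sub 1 (by positivity) hS] at hsum
  simp only [h, sum_sub_distrib, hsum, sum_const, card_univ, Fintype.card_fun, nsmul_eq_mul]
  push_cast
  ring

theorem sum_sq_card_compl_image_sub_le (S : Finset α) (hβ : 2 ≤ Fintype.card β) :
    ∑ ω : α → β,
        ((#(S.image ω)ᶜ : ℝ) - Fintype.card β * (1 - 1 / Fintype.card β) ^ #S) ^ 2 ≤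
      (Fintype.card β : ℝ) ^ Fintype.card α * (Fintype.card β / 4) := by
  have hS : #S ≤ Fintype.card α := card_le_univ S
  have h₁ := congrArg (Nat.cast (R := ℝ)) (sum_card_compl_image (β := β) S)
  have h₂ := congrArg (Nat.cast (R := ℝ)) (sum_card_compl_image_sq (β := β) S)
  push_cast [Nat.cast_sub (by omega : 1 ≤ Fintype.card β), Nat.cast_sub hβ] at h₁ h₂
  have hq₀ : (Fintype.card β : ℝ) ≠ 0 := by positivity
  rw [sub_pow_mul_pow_sub 1 hq₀ hS] at h₁ h₂
  rw [sub_pow_mul_pow_sub 2 hq₀ hS] at h₂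
  simp only [sub_sq, sum_add_distrib, sum_sub_distrib, ← sum_mul, ← mul_sum, h₁, h₂, sum_const,
    card_univ, Fintype.card_fun, nsmul_eq_mul]
  set q : ℝ := (Fintype.card β : ℝ) with hq
  set s₁ : ℝ := (1 - 1 / q) ^ #S
  set s₂ : ℝ := (1 - 2 / q) ^ #S
  have hq2 : (2 : ℝ) ≤ q := by rw [hq]; exact_mod_cast hβ
  have hq0 : 0 < q := by linarith
  have hs₂₁ : s₂ ≤ s₁ ^ 2 := by
    rw [← pow_mul, mul_comm, pow_mul]
    refine pow_le_pow_left₀ (by rw [sub_nonneg, div_le_one hq0]; linarith) ?_ _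
    linear_combination sq_nonneg (1 / q)
  -- the variance of the number of missed bins; `s₂ ≤ s₁ ^ 2` is negative correlation
  have key : q * s₁ + q * (q - 1) * s₂ - q ^ 2 * s₁ ^ 2 ≤ q / 4 := by
    nlinarith [mul_le_mul_of_nonneg_left hs₂₁ (by nlinarith : 0 ≤ q * (q - 1)),
      mul_nonneg hq0.le (sq_nonneg (s₁ - 1 / 2))]
  calc _ = q ^ Fintype.card α * (q * s₁ + q * (q - 1) * s₂ - q ^ 2 * s₁ ^ 2) := by
        push_cast; ring
    _ ≤ q ^ Fintype.card α * (q / 4) := by gcongr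

end Counting

theorem abs_exp_neg_sub_cubic_le {y : ℝ} (h0 : 0 ≤ y) (h1 : y ≤ 1) :
    |Real.exp (-y) - (1 - y + y ^ 2 / 2 - y ^ 3 / 6)| ≤ y ^ 4 / 16 := by
  have h := Real.exp_bound (x := -y) (by rwa [abs_neg, abs_of_nonneg h0]) (n := 4) (by norm_num)
  norm_num [Finset.sum_range_succ, Nat.factorial, abs_of_nonneg h0] at h
  calc _ = |Real.exp (-y) - (1 + -y + y ^ 2 / 2 + (-y) ^ 3 / 6)| := by ring_nf
    _ ≤ y ^ 4 * (5 / 96) := h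
    _ ≤ y ^ 4 / 16 := by linarith [pow_nonneg h0 4]

theorem pow_one_sub_inv_le_quadratic {x : ℝ} (hx : 1 ≤ x) {m : ℕ} (hm : m ≤ x) :
    (1 - 1 / x) ^ m ≤ 1 - m / x + (m / x) ^ 2 / 2 := by
  have hy : 0 ≤ (m : ℝ) / x := by positivity
  have hy1 : (m : ℝ) / x ≤ 1 := div_le_one_of_le₀ hm (by linarith)
  calc (1 - 1 / x) ^ m ≤ Real.exp (-(1 / x)) ^ m :=
        pow_le_pow_left₀ (by rw [sub_nonneg, div_le_one (by linarith)]; exact hx)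
          (Real.one_sub_le_exp_neg _) m
    _ = Real.exp (-(m / x)) := by rw [← Real.exp_nat_mul]; ring_nf
    _ ≤ 1 - m / x + (m / x) ^ 2 / 2 := by
        have := (abs_le.1 (abs_exp_neg_sub_cubic_le hy hy1)).2
        nlinarith [mul_le_mul_of_nonneg_left hy1 (pow_nonneg hy 3), pow_nonneg hy 3]

theorem quartic_le_pow_one_sub_inv {x : ℝ} (hx : 1 < x) {m : ℕ} (hm : m ≤ x - 1) :
    1 - m / (x - 1) + (m / (x - 1)) ^ 2 / 2 - (m / (x - 1)) ^ 3 / 6 - (m / (x - 1)) ^ 4 / 16 ≤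
      (1 - 1 / x) ^ m := by
  have hx1 : 0 < x - 1 := by linarith
  have hw : 0 ≤ (m : ℝ) / (x - 1) := by positivity
  have hw1 : (m : ℝ) / (x - 1) ≤ 1 := div_le_one_of_le₀ hm hx1.le
  have hstep : Real.exp (-(1 / (x - 1))) ≤ 1 - 1 / x := by
    have h := Real.add_one_le_exp (1 / (x - 1))
    rw [Real.exp_neg, show 1 - 1 / x = (1 / (x - 1) + 1)⁻¹ by field_simp; ring]
    exact inv_anti₀ (by positivity) h
  calc _ ≤ Real.exp (-(m / (x - 1))) := by
        linarith [(abs_le.1 (abs_exp_neg_sub_cubic_le hw hw1)).1]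
    _ = Real.exp (-(1 / (x - 1))) ^ m := by rw [← Real.exp_nat_mul]; ring_nf
    _ ≤ (1 - 1 / x) ^ m := pow_le_pow_left₀ (Real.exp_pos _).le hstep m

section TopBins

variable {n k : ℕ}

theorem card_filter_mem_le_ballsInTopBins {T : Finset (Fin n)} (hT : #T ≤ k) (hk : k ≤ n)
    (ω : Fin n → Fin n) : #{i | ω i ∈ T} ≤ ballsInTopBins n k ω := by
  obtain ⟨U, hTU, -, hU⟩ := exists_subsuperset_card_eq (subset_univ T) hT (by simpa using hk)
  calc #{i | ω i ∈ T} ≤ #{i | ω i ∈ U} :=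
        card_le_card (monotone_filter_right _ fun _ _ h => hTU h)
    _ = ∑ b ∈ U, #{i | ω i = b} := (sum_card_fiberwise_eq_card_filter _ _ _).symm
    _ ≤ ballsInTopBins n k ω :=
      le_sup (f := fun T => ∑ b ∈ T, #{i | ω i = b}) (mem_powersetCard_univ.2 hU)

/-- Pointwise Chebyshev: if `#(S.image ω) > k`, the number of missed bins lies `δ` below `ν`, so
the subtracted term alone exceeds the `n` balls counted on the left. -/
theorem card_filter_mem_image_sub_le_ballsInTopBins (hk : k ≤ n) (S : Finset (Fin n))
    {δ ν : ℝ} (hδ : 0 < δ) (hν : n - k + δ ≤ ν) (ω : Fin n → Fin n) :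
    (#{i | ω i ∈ S.image ω} : ℝ) - n / δ ^ 2 * ((#(S.image ω)ᶜ : ℝ) - ν) ^ 2 ≤
      ballsInTopBins n k ω := by
  by_cases h : #(S.image ω) ≤ k
  · have hX : (#{i | ω i ∈ S.image ω} : ℝ) ≤ ballsInTopBins n k ω := by
      exact_mod_cast card_filter_mem_le_ballsInTopBins h hk ω
    have : 0 ≤ n / δ ^ 2 * ((#(S.image ω)ᶜ : ℝ) - ν) ^ 2 := by positivity
    linarith
  · have hcompl : (#(S.image ω)ᶜ : ℝ) + δ ≤ ν := by
      have : (k : ℝ) + 1 ≤ #(S.image ω) := by exact_mod_cast not_le.1 h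
      rw [card_compl, Fintype.card_fin, Nat.cast_sub (by simpa using card_le_univ (S.image ω))]
      linarith
    have hX : (#{i | ω i ∈ S.image ω} : ℝ) ≤ n := by
      exact_mod_cast (card_filter_le _ _).trans (by simp)
    have : δ ^ 2 ≤ ((#(S.image ω)ᶜ : ℝ) - ν) ^ 2 := by nlinarith
    have : (n : ℝ) ≤ n / δ ^ 2 * ((#(S.image ω)ᶜ : ℝ) - ν) ^ 2 := by
      calc (n : ℝ) = n / δ ^ 2 * δ ^ 2 := by field_simp
        _ ≤ _ := by gcongr
    have : (0 : ℝ) ≤ ballsInTopBins n k ω := by positivity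
    linarith

theorem sum_ballsInTopBins_ge_of_card_le (hn : 0 < n) {S : Finset (Fin n)} (hS : #S ≤ k)
    (hk : k ≤ n) :
    (n : ℝ) ^ n * (n - (n - #S) * (1 - 1 / n) ^ #S) ≤
      ∑ ω, (ballsInTopBins n k ω : ℝ) := by
  have h := sum_card_filter_mem_image (β := Fin n) S (by simpa using hn)
  simp only [Fintype.card_fin] at h
  rw [← h]
  gcongr with ω
  exact_mod_cast card_filter_mem_le_ballsInTopBins (card_image_le.trans hS) hk ω

theorem sum_ballsInTopBins_ge (hn : 2 ≤ n) (hk : k ≤ n) (S : Finset (Fin n)) {δ : ℝ}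
    (hδ : 0 < δ) (hgap : n - k + δ ≤ n * (1 - 1 / n) ^ #S) :
    (n : ℝ) ^ n * (n - (n - #S) * (1 - 1 / n) ^ #S - n ^ 2 / (4 * δ ^ 2)) ≤
      ∑ ω, (ballsInTopBins n k ω : ℝ) := by
  have hX := sum_card_filter_mem_image (β := Fin n) S (by simp; omega)
  have hV := sum_sq_card_compl_image_sub_le (α := Fin n) (β := Fin n) S (by simpa using hn)
  simp only [Fintype.card_fin] at hX hV
  calc (n : ℝ) ^ n * (n - (n - #S) * (1 - 1 / n) ^ #S - n ^ 2 / (4 * δ ^ 2))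
      = ∑ ω : Fin n → Fin n, (#{i | ω i ∈ S.image ω} : ℝ) -
          n / δ ^ 2 * (n ^ n * (n / 4)) := by
        rw [hX]; field_simp
    _ ≤ ∑ ω : Fin n → Fin n, (#{i | ω i ∈ S.image ω} : ℝ) -
          n / δ ^ 2 *
            ∑ ω : Fin n → Fin n, ((#(S.image ω)ᶜ : ℝ) - n * (1 - 1 / n) ^ #S) ^ 2 := by
        gcongr
    _ ≤ ∑ ω, (ballsInTopBins n k ω : ℝ) := by
        rw [mul_sum, ← sum_sub_distrib]
        gcongr with ω
        exact card_filter_mem_image_sub_le_ballsInTopBins hk S hδ hgap ω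

theorem three_halves_mul_le_sum_ballsInTopBins_of_le (hn : 0 < n) (hk : 8 * k ≤ 3 * n) :
    (3 / 2 : ℝ) * k * n ^ n ≤ ∑ ω, (ballsInTopBins n k ω : ℝ) := by
  obtain ⟨S, -, hS⟩ := exists_subset_card_eq (s := (univ : Finset (Fin n))) (n := k)
    (by simp; omega)
  have h := sum_ballsInTopBins_ge_of_card_le hn hS.le (by omega)
  rw [hS] at h
  have hb : (0 : ℝ) < n := by exact_mod_cast hn
  have hs := pow_one_sub_inv_le_quadratic (x := n) (m := k) (by exact_mod_cast hn)
    (by exact_mod_cast (by omega : k ≤ n))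
  set x : ℝ := k / n with hx
  have hxk : (k : ℝ) = x * n := by rw [hx]; field_simp
  have hx0 : 0 ≤ x := by positivity
  have hx38 : x ≤ 3 / 8 := by
    have : (8 * k : ℝ) ≤ 3 * n := by exact_mod_cast hk
    rw [hx, div_le_iff₀ hb]; linarith
  have key : 3 / 2 * x ≤ 1 - (1 - x) * (1 - 1 / n) ^ k := by
    nlinarith [mul_le_mul_of_nonneg_left hs (by linarith : 0 ≤ 1 - x),
      mul_nonneg hx0 (mul_nonneg (by linarith : 0 ≤ 3 / 8 - x) (by linarith : 0 ≤ 21 / 8 - x))]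
  calc (3 / 2 : ℝ) * k * n ^ n = n ^ n * (n * (3 / 2 * x)) := by rw [hxk]; ring
    _ ≤ n ^ n * (n * (1 - (1 - x) * (1 - 1 / n) ^ k)) := by gcongr
    _ = n ^ n * (n - (n - k) * (1 - 1 / n) ^ k) := by rw [hxk]; ring
    _ ≤ _ := h

theorem three_halves_mul_le_sum_ballsInTopBins_of_gt (hn : 10 ^ 6 ≤ n) (hk : 3 * n < 8 * k)
    (hk2 : 2 * k ≤ n) :
    (3 / 2 : ℝ) * k * n ^ n ≤ ∑ ω, (ballsInTopBins n k ω : ℝ) := by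
  -- about `n (1 - e^(-m/n)) ≤ k - n / 200` bins are hit on average, and `δ = n / 200` makes
  -- Chebyshev's loss `n ^ 2 / (4 δ ^ 2) = 10 ^ 4`
  set m := 6 * k / 5 + 1
  obtain ⟨S, -, hS⟩ := exists_subset_card_eq (s := (univ : Finset (Fin n))) (n := m)
    (by simp; omega)
  have hb : (10 : ℝ) ^ 6 ≤ n := by exact_mod_cast hn
  have hka : (3 * n + 1 : ℝ) ≤ 8 * k := by exact_mod_cast hk
  have hk2' : (2 * k : ℝ) ≤ n := by exact_mod_cast hk2
  have hmk : (6 * k : ℝ) ≤ 5 * m := by exact_mod_cast (by omega : 6 * k ≤ 5 * m)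
  have hmk' : (5 * m : ℝ) ≤ 6 * k + 5 := by exact_mod_cast (by omega : 5 * m ≤ 6 * k + 5)
  set y : ℝ := m / n with hy
  set w : ℝ := m / (n - 1) with hw
  have hmy : (m : ℝ) = y * n := by rw [hy]; field_simp
  have hb1 : (0 : ℝ) < n - 1 := by linarith
  have hmw : (m : ℝ) = w * (n - 1) := by rw [hw]; field_simp
  have hy0 : 0.45 ≤ y := by rw [hy, le_div_iff₀ (by linarith)]; linarith
  have hy1 : y ≤ 0.605 := by rw [hy, div_le_iff₀ (by linarith)]; linarith
  have hw0 : 0.45 ≤ w := by rw [hw, le_div_iff₀ hb1]; linarith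
  have hw1 : w ≤ 0.605 := by rw [hw, div_le_iff₀ hb1]; linarith
  have hs_le := pow_one_sub_inv_le_quadratic (x := n) (m := m) (by linarith) (by linarith)
  have hs_ge := quartic_le_pow_one_sub_inv (x := n) (m := m) (by linarith) (by linarith)
  rw [← hy] at hs_le
  rw [← hw] at hs_ge
  have hgap : (n : ℝ) - k + n / 200 ≤ n * (1 - 1 / n) ^ #S := by
    have hpoly : w - w ^ 2 / 2 + w ^ 3 / 6 + w ^ 4 / 16 + 1 / 200 + 1 / 2000 ≤ 5 * w / 6 := by
      nlinarith [mul_nonneg (sub_nonneg.2 hw0) (sub_nonneg.2 hw1),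
        mul_nonneg (mul_nonneg (sub_nonneg.2 hw0) (sub_nonneg.2 hw1)) (sub_nonneg.2 hw1),
        sq_nonneg (w - 0.45)]
    have hnw : n * w ≤ m + 1 := by linarith
    rw [hS]
    linarith [mul_le_mul_of_nonneg_left hs_ge (by linarith : (0 : ℝ) ≤ n),
      mul_le_mul_of_nonneg_left hpoly (by linarith : (0 : ℝ) ≤ n)]
  have h := sum_ballsInTopBins_ge (by omega) (by omega) S (δ := n / 200) (by positivity) hgap
  rw [hS] at h
  have hpoly : 1 / 80 ≤ 3 * y / 4 - 3 * y ^ 2 / 2 + y ^ 3 / 2 := by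
    nlinarith [mul_nonneg (sub_nonneg.2 hy0) (sub_nonneg.2 hy1),
      mul_nonneg (mul_nonneg (sub_nonneg.2 hy0) (sub_nonneg.2 hy1)) (sub_nonneg.2 hy1)]
  have key : (3 / 2 : ℝ) * k ≤ n - (n - m) * (1 - 1 / n) ^ m - n ^ 2 / (4 * (n / 200) ^ 2) := by
    have hchev : (n : ℝ) ^ 2 / (4 * (n / 200) ^ 2) = 10000 := by field_simp; norm_num
    have hexp : (n : ℝ) - (n - m) * (1 - y + y ^ 2 / 2) =
        n * (2 * y - 3 * y ^ 2 / 2 + y ^ 3 / 2) := by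
      rw [hmy]; ring
    linarith [mul_le_mul_of_nonneg_left hs_le (by linarith : (0 : ℝ) ≤ n - m),
      mul_le_mul_of_nonneg_left hpoly (by linarith : (0 : ℝ) ≤ n)]
  calc (3 / 2 : ℝ) * k * n ^ n
      ≤ n ^ n * (n - (n - m) * (1 - 1 / n) ^ m - n ^ 2 / (4 * (n / 200) ^ 2)) := by
        rw [mul_comm]; gcongr
    _ ≤ _ := h

end TopBins

/-- If `n` balls are thrown independently and uniformly at random into `n` bins,
then for sufficiently large `n` and any `k ≤ n/2`, the expected number of balls
in the `k` most loaded bins is at least `1.5 k`. -/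
theorem stmt_0 :
    ∃ N : ℕ, ∀ n : ℕ, N ≤ n → ∀ k : ℕ, k ≤ n / 2 →
      (3 / 2 : ℝ) * k ≤
        (∑ ω : Fin n → Fin n, (ballsInTopBins n k ω : ℝ)) / (n : ℝ) ^ n := by
  refine ⟨10 ^ 6, fun n hn k hk => ?_⟩
  rw [le_div_iff₀ (pow_pos (by exact_mod_cast (by omega : 0 < n)) n)]
  rcases le_or_gt (8 * k) (3 * n) with hsmall | hlarge
  · exact three_halves_mul_le_sum_ballsInTopBins_of_le (by omega) hsmall
  · exact three_halves_mul_le_sum_ballsInTopBins_of_gt hn hlarge (by omega)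
end

section
/- Let Y_1, ..., Y_n be i.i.d. Poisson random variables with mean 1, and let Z_i be the indicator that Y_i ≥ t/2 where t = log(n/k)/log log(n/k). Then for n/k sufficiently large, E[∑ Z_i] ≥ 4k. -/
/-!
Since `Pr[Poisson(1) ≥ t/2] ≥ Pr[Poisson(1) = m] = 1 / (e · m!)` with `m = ⌈t/2⌉`, it suffices
that `4 e · m! ≤ n/k`. Writing `L = log(n/k)`, we have `m ≤ L / (2 log L) + 1`, so
`log (m!) ≤ m log m ≤ m log L ≤ L/2 + log L`, which leaves room for `log (4e)` once `L ≥ 20`.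
-/

open Real ProbabilityTheory
open scoped Nat

set_option linter.deprecated false

lemma ProbabilityTheory.poissonPMFReal_le_tsum_ite {r : NNReal} {s : ℝ} {m : ℕ} (hm : s ≤ m) :
    poissonPMFReal r m ≤ ∑' j : ℕ, if s ≤ (j : ℝ) then poissonPMFReal r j else 0 := by
  have hnonneg (j : ℕ) : 0 ≤ if s ≤ (j : ℝ) then poissonPMFReal r j else 0 := by
    split_ifs
    exacts [poissonPMFReal_nonneg, le_rfl]
  have hsummable : Summable fun j : ℕ ↦ if s ≤ (j : ℝ) then poissonPMFReal r j else 0 :=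
    (hasSum_one_poissonMeasure r).summable.of_nonneg_of_le hnonneg fun j ↦ by
      split_ifs
      exacts [le_rfl, poissonPMFReal_nonneg]
  simpa [hm] using hsummable.le_tsum m fun j _ ↦ hnonneg j

lemma ProbabilityTheory.poissonPMFReal_one (m : ℕ) :
    poissonPMFReal 1 m = (exp 1 * m !)⁻¹ := by
  simp [poissonPMFReal, exp_neg, div_eq_mul_inv, mul_comm]

lemma Nat.factorial_le_exp_mul_log (m : ℕ) : (m ! : ℝ) ≤ Real.exp (m * Real.log m) := by
  rcases m.eq_zero_or_pos with rfl | hm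
  · simp
  calc (m ! : ℝ) ≤ (m : ℝ) ^ m := mod_cast m.factorial_le_pow
    _ = Real.exp (m * Real.log m) := by rw [Real.exp_nat_mul, Real.exp_log (by positivity)]

lemma four_mul_exp_one_mul_factorial_ceil_le {L : ℝ} (hL : 20 ≤ L) :
    4 * exp 1 * (⌈L / log L / 2⌉₊ ! : ℝ) ≤ exp L := by
  set m := ⌈L / log L / 2⌉₊
  have hlogL : 1 ≤ log L := by
    rw [le_log_iff_exp_le (by linarith)]
    linarith [exp_one_lt_d9]
  have hm_pos : (0 : ℝ) < m := mod_cast Nat.ceil_pos.mpr (by positivity)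
  have hm : (m : ℝ) ≤ L / log L / 2 + 1 :=
    (Nat.ceil_lt_add_one (by positivity)).le
  have hmL : (m : ℝ) ≤ L := by
    have : L / log L ≤ L := div_le_self (by linarith) hlogL
    linarith
  have hm_log : (m : ℝ) * log m ≤ L / 2 + log L :=
    calc (m : ℝ) * log m ≤ (L / log L / 2 + 1) * log L :=
          mul_le_mul hm (log_le_log hm_pos hmL) (log_natCast_nonneg m) (by positivity)
      _ = L / 2 + log L := by field_simp
  have hlogL_le : log L ≤ L / 8 + log 8 - 1 := by
    have := log_le_sub_one_of_pos (show 0 < L / 8 by linarith)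
    rw [log_div (by linarith) (by norm_num)] at this
    linarith
  have hlog32 : log 4 + log 8 ≤ 5 * 0.6931471808 := by
    rw [show (4 : ℝ) = 2 ^ 2 by norm_num, show (8 : ℝ) = 2 ^ 3 by norm_num, log_pow, log_pow]
    push_cast
    linarith [log_two_lt_d9]
  calc 4 * exp 1 * (m ! : ℝ) ≤ 4 * exp 1 * exp (m * log m) := by
        gcongr; exact m.factorial_le_exp_mul_log
    _ = exp (log 4 + 1 + m * log m) := by rw [exp_add, exp_add, exp_log (by norm_num)]
    _ ≤ exp L := exp_le_exp.mpr (by linarith)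

/-- Let `Y₁, …, Yₙ` be i.i.d. Poisson random variables with mean 1 and let `Zᵢ` be the
indicator that `Yᵢ ≥ t/2` where `t = log(n/k)/log log(n/k)`. For `n/k` sufficiently large,
`E[∑ᵢ Zᵢ] = n · Pr[Poisson(1) ≥ t/2] ≥ 4k`. -/
theorem stmt_2 :
    ∃ C : ℝ, ∀ n k : ℕ, 0 < k → C ≤ (n : ℝ) / k →
      (4 : ℝ) * k ≤
        (n : ℝ) * ∑' j : ℕ,
          (if (Real.log ((n : ℝ) / k) / Real.log (Real.log ((n : ℝ) / k))) / 2 ≤ (j : ℝ)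
            then ProbabilityTheory.poissonPMFReal 1 j else 0) := by
  refine ⟨exp 20, fun n k hk hC => ?_⟩
  have hk0 : (0 : ℝ) < k := mod_cast hk
  have hx : 0 < (n : ℝ) / k := (exp_pos 20).trans_le hC
  set m := ⌈log ((n : ℝ) / k) / log (log ((n : ℝ) / k)) / 2⌉₊
  have hfact : 4 * exp 1 * (m ! : ℝ) ≤ n / k := by
    have hL : 20 ≤ log ((n : ℝ) / k) := (le_log_iff_exp_le hx).mpr hC
    simpa [exp_log hx] using four_mul_exp_one_mul_factorial_ceil_le hL
  calc (4 : ℝ) * k ≤ n * poissonPMFReal 1 m := by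
        rw [poissonPMFReal_one, ← div_eq_mul_inv, le_div_iff₀ (by positivity)]
        rw [le_div_iff₀ hk0] at hfact
        linarith
    _ ≤ _ := mul_le_mul_of_nonneg_left (poissonPMFReal_le_tsum_ite (Nat.le_ceil _))
        (by positivity)
end

section
/- Let Y ~ Binomial(n, p) with n ≥ 2 and 1/n ≤ p ≤ 1 - 1/n. Then the mean absolute deviation of Y satisfies E|Y - E[Y]| ≥ std(Y)/√2, where std(Y) = √(np(1-p)). -/
/-!
By de Moivre's formula, `E|Y - np| = 2m(1-p) C(n,m) p^m (1-p)^(n-m)` with `m = ⌊np⌋ + 1`.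
Squared, the claim becomes `n/2 ≤ 4 m² C(n,m)² p^(2m-1) (1-p)^(2(n-m)+1)`. For fixed `m` the
right-hand side is log-concave in `p`, so it suffices to check the endpoints `p = (m-1)/n` and
`p = m/n`, where the inequality is the entropy bound `n^(2n+1) ≤ 8 k^(2k+1) j^(2j+1) C(n,k)²`
(`k + j = n`, `k, j ≥ 1`). That bound follows from Stirling's formula with Robbins' error term,
`√π ≤ stirlingSeq k ≤ √π exp (1/(12k))`, apart from three small cases checked by computation.
-/

open Finset Filter Real Topology
open scoped Nat

namespace Stirling

theorem stirlingSeq_le_sqrt_pi_mul_exp {n : ℕ} (hn : n ≠ 0) :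
    stirlingSeq n ≤ √π * exp (1 / (12 * n)) := by
  obtain ⟨k, rfl⟩ := Nat.exists_eq_add_one_of_ne_zero hn
  set f : ℕ → ℝ := fun k ↦ log (stirlingSeq (k + 1)) - 1 / (12 * ((k : ℝ) + 1))
  have hf : Monotone f := by
    refine monotone_nat_of_le_succ fun k ↦ ?_
    have hrobbins := log_stirlingSeq_sdiff_le (k + 1)
    have hstep : (1 : ℝ) / (12 * (k + 1 : ℕ) * ((k + 1 : ℕ) + 1))
        = 1 / (12 * ((k : ℝ) + 1)) - 1 / (12 * ((k + 1 : ℕ) + 1)) := by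
      push_cast; field_simp; ring
    simp only [f]
    linarith
  have hlim : Tendsto f atTop (𝓝 (log √π - 0)) := by
    refine ((tendsto_stirlingSeq_sqrt_pi.comp (tendsto_add_atTop_nat 1)).log
      (by positivity)).sub ?_
    simpa [div_eq_mul_inv] using tendsto_one_div_add_atTop_nhds_zero_nat.div_const (12 : ℝ)
  have hk : log (stirlingSeq (k + 1)) ≤ log √π + 1 / (12 * ((k : ℝ) + 1)) := by
    have := hf.ge_of_tendsto hlim k
    simp only [f, sub_zero] at this
    linarith
  calc stirlingSeq (k + 1) = exp (log (stirlingSeq (k + 1))) :=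
        (exp_log (stirlingSeq'_pos k)).symm
    _ ≤ exp (log √π + 1 / (12 * ((k : ℝ) + 1))) := exp_le_exp.mpr hk
    _ = √π * exp (1 / (12 * (k + 1 : ℕ))) := by
        rw [exp_add, exp_log (by positivity)]; push_cast; rfl

theorem stirlingSeq_mul_le_two_mul {k j : ℕ} (hk : k ≠ 0) (hj : j ≠ 0) (hkj : 4 ≤ k + j) :
    stirlingSeq k * stirlingSeq j ≤ 2 * stirlingSeq (k + j) := by
  have hexp : exp (1 / (12 * k)) * exp (1 / (12 * j)) ≤ 9 / 8 := by
    have h3 : (3 * (k + j) : ℝ) ≤ 4 * k * j := by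
      have hk1 : (1 : ℝ) ≤ k := by exact_mod_cast Nat.one_le_iff_ne_zero.2 hk
      have hj1 : (1 : ℝ) ≤ j := by exact_mod_cast Nat.one_le_iff_ne_zero.2 hj
      have h4 : (4 : ℝ) ≤ k + j := by exact_mod_cast hkj
      nlinarith [mul_nonneg (sub_nonneg.2 hk1) (sub_nonneg.2 hj1)]
    have hk' : (0 : ℝ) < k := by positivity
    have hj' : (0 : ℝ) < j := by positivity
    rw [← exp_add]
    calc exp (1 / (12 * k) + 1 / (12 * j)) ≤ exp (1 / 9) := by
          gcongr
          rw [div_add_div _ _ (by positivity) (by positivity), div_le_div_iff₀ (by positivity)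
            (by positivity)]
          nlinarith
      _ ≤ 1 / (1 - 1 / 9) := (exp_bound_div_one_sub_of_interval' (by norm_num) (by norm_num)).le
      _ = 9 / 8 := by norm_num
  have hpi : √π ≤ 16 / 9 := by
    rw [sqrt_le_left (by norm_num)]
    linarith [pi_lt_d2]
  calc stirlingSeq k * stirlingSeq j
      ≤ (√π * exp (1 / (12 * k))) * (√π * exp (1 / (12 * j))) := by
        have hk0 : 0 ≤ stirlingSeq k := (sqrt_pi_le_stirlingSeq hk).trans' (by positivity)
        have hj0 : 0 ≤ stirlingSeq j := (sqrt_pi_le_stirlingSeq hj).trans' (by positivity)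
        gcongr
        · exact stirlingSeq_le_sqrt_pi_mul_exp hk
        · exact stirlingSeq_le_sqrt_pi_mul_exp hj
    _ = √π * (√π * (exp (1 / (12 * k)) * exp (1 / (12 * j)))) := by ring
    _ ≤ √π * (16 / 9 * (9 / 8)) := by gcongr
    _ = 2 * √π := by ring
    _ ≤ 2 * stirlingSeq (k + j) := by gcongr; exact sqrt_pi_le_stirlingSeq (by omega)

theorem factorial_sq_mul_exp_pow {k : ℕ} (hk : k ≠ 0) :
    (k ! : ℝ) ^ 2 * exp 1 ^ (2 * k) = 2 * (k : ℝ) ^ (2 * k + 1) * stirlingSeq k ^ 2 := by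
  have : (0 : ℝ) < k := by positivity
  unfold stirlingSeq
  rw [div_pow, mul_pow, sq_sqrt (by positivity), div_pow]
  field_simp
  ring

end Stirling

open Stirling in
theorem add_pow_le_choose_sq {k j : ℕ} (hk : k ≠ 0) (hj : j ≠ 0) :
    (k + j) ^ (2 * (k + j) + 1) ≤ 8 * k ^ (2 * k + 1) * j ^ (2 * j + 1) * (k + j).choose k ^ 2 := by
  rcases Nat.lt_or_ge (k + j) 4 with hsmall | hkj
  · obtain ⟨rfl | rfl, rfl | rfl⟩ : (k = 1 ∨ k = 2) ∧ (j = 1 ∨ j = 2) := by omega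
    all_goals norm_num [Nat.choose]
  have hs : (stirlingSeq k * stirlingSeq j) ^ 2 ≤ (2 * stirlingSeq (k + j)) ^ 2 :=
    pow_le_pow_left₀ (by unfold stirlingSeq; positivity) (stirlingSeq_mul_le_two_mul hk hj hkj) 2
  have hchoose : ((k + j).choose k : ℝ) * k ! * j ! = (k + j)! := by
    rw [Nat.choose_symm_add]; exact_mod_cast Nat.add_choose_mul_factorial_mul_factorial k j
  have hK := factorial_sq_mul_exp_pow hk
  have hJ := factorial_sq_mul_exp_pow hj
  have hN := factorial_sq_mul_exp_pow (by omega : k + j ≠ 0)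
  rw [← Nat.cast_le (α := ℝ)]
  refine le_of_mul_le_mul_right (a := (k ! : ℝ) ^ 2 * j ! ^ 2 * exp 1 ^ (2 * (k + j))) ?_
    (by positivity)
  set N : ℝ := ((k + j : ℕ) : ℝ) ^ (2 * (k + j) + 1)
  set K : ℝ := (k : ℝ) ^ (2 * k + 1)
  set J : ℝ := (j : ℝ) ^ (2 * j + 1)
  calc ((k + j) ^ (2 * (k + j) + 1) : ℕ) * ((k ! : ℝ) ^ 2 * j ! ^ 2 * exp 1 ^ (2 * (k + j)))
      = N * ((k ! : ℝ) ^ 2 * exp 1 ^ (2 * k)) * ((j ! : ℝ) ^ 2 * exp 1 ^ (2 * j)) := by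
        rw [Nat.cast_pow, mul_add 2 k j, pow_add (exp 1)]; ring
    _ = 4 * N * K * J * (stirlingSeq k * stirlingSeq j) ^ 2 := by rw [hK, hJ]; ring
    _ ≤ 4 * N * K * J * (2 * stirlingSeq (k + j)) ^ 2 := by gcongr
    _ = 8 * K * J * (((k + j)! : ℝ) ^ 2 * exp 1 ^ (2 * (k + j))) := by rw [hN]; ring
    _ = ((8 * k ^ (2 * k + 1) * j ^ (2 * j + 1) * (k + j).choose k ^ 2 : ℕ) : ℝ) *
          ((k ! : ℝ) ^ 2 * j ! ^ 2 * exp 1 ^ (2 * (k + j))) := by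
        rw [← hchoose]; push_cast; ring

theorem sub_mul_choose_eq_sub (n : ℕ) (p : ℝ) (k : ℕ) :
    ((k : ℝ) - n * p) * (n.choose k * p ^ k * (1 - p) ^ (n - k)) =
      k * (1 - p) * (n.choose k * p ^ k * (1 - p) ^ (n - k)) -
        (k + 1 : ℕ) * (1 - p) * (n.choose (k + 1) * p ^ (k + 1) * (1 - p) ^ (n - (k + 1))) := by
  rcases Nat.lt_or_ge k n with hkn | hnk
  · have hchoose : (n.choose (k + 1) : ℝ) * (k + 1 : ℕ) = n.choose k * (n - k) := by
      rw [← Nat.cast_sub hkn.le]; exact_mod_cast Nat.choose_succ_right_eq n k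
    have hpow : (1 - p) ^ (n - k) = (1 - p) ^ (n - (k + 1)) * (1 - p) := by
      rw [← pow_succ]; congr 1; omega
    rw [hpow]
    linear_combination (1 - p) * p ^ (k + 1) * (1 - p) ^ (n - (k + 1)) * hchoose
  · rw [Nat.choose_eq_zero_of_lt (by omega : n < k + 1)]
    rcases hnk.eq_or_lt with rfl | hnk
    · push_cast; ring
    · simp [Nat.choose_eq_zero_of_lt hnk]

theorem sum_choose_mul_abs_sub_eq (n m : ℕ) (p : ℝ) (hmn : m ≤ n + 1) (hm₁ : (m : ℝ) - 1 ≤ n * p)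
    (hm₂ : n * p ≤ m) :
    ∑ i ∈ range (n + 1), (n.choose i : ℝ) * p ^ i * (1 - p) ^ (n - i) * |(i : ℝ) - n * p| =
      2 * m * (1 - p) * (n.choose m * p ^ m * (1 - p) ^ (n - m)) := by
  set A : ℕ → ℝ := fun k ↦ k * (1 - p) * (n.choose k * p ^ k * (1 - p) ^ (n - k))
  have htel (k : ℕ) : ((k : ℝ) - n * p) * (n.choose k * p ^ k * (1 - p) ^ (n - k)) =
      A k - A (k + 1) := sub_mul_choose_eq_sub n p k
  have hlow : ∀ i ∈ range m, (n.choose i : ℝ) * p ^ i * (1 - p) ^ (n - i) * |(i : ℝ) - n * p| =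
      A (i + 1) - A i := by
    intro i hi
    have : (i : ℝ) + 1 ≤ m := by exact_mod_cast mem_range.1 hi
    rw [abs_of_nonpos (by linarith), mul_comm, neg_mul, htel]
    ring
  have hhigh : ∀ i ∈ Ico m (n + 1),
      (n.choose i : ℝ) * p ^ i * (1 - p) ^ (n - i) * |(i : ℝ) - n * p| = -(A (i + 1) - A i) := by
    intro i hi
    have : (m : ℝ) ≤ i := by exact_mod_cast (mem_Ico.1 hi).1
    rw [abs_of_nonneg (by linarith), mul_comm, htel, neg_sub]
  have hA0 : A 0 = 0 := by simp [A]
  have hAn : A (n + 1) = 0 := by simp [A]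
  rw [← sum_range_add_sum_Ico _ hmn, sum_congr rfl hlow, sum_congr rfl hhigh, sum_range_sub,
    sum_neg_distrib, sum_Ico_sub _ hmn, hA0, hAn]
  ring

theorem concaveOn_log_pow_mul_one_sub_pow (a b : ℕ) :
    ConcaveOn ℝ (Set.Ioo 0 1) fun w ↦ log (w ^ a * (1 - w) ^ b) := by
  have hlog : ConcaveOn ℝ (Set.Ioi 0) log := strictConcaveOn_log_Ioi.concaveOn
  have hlog_one_sub := hlog.comp_affineMap (AffineMap.lineMap (1 : ℝ) 0)
  refine ((hlog.subset Set.Ioo_subset_Ioi_self (convex_Ioo 0 1)).smul (Nat.cast_nonneg a)).add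
    ((hlog_one_sub.subset (fun w hw ↦ ?_) (convex_Ioo 0 1)).smul (Nat.cast_nonneg b))
    |>.congr fun w hw ↦ ?_
  · simpa [AffineMap.lineMap_apply_ring] using hw.2
  · have := hw.1
    have : 0 < 1 - w := sub_pos.2 hw.2
    simp [log_mul, log_pow, AffineMap.lineMap_apply_ring, *, ne_of_gt]

theorem min_le_pow_mul_one_sub_pow (a b : ℕ) {x y z : ℝ} (hx : 0 < x) (hy : y < 1)
    (hz : z ∈ Set.Icc x y) :
    min (x ^ a * (1 - x) ^ b) (y ^ a * (1 - y) ^ b) ≤ z ^ a * (1 - z) ^ b := by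
  have hxy : x ≤ y := hz.1.trans hz.2
  have mem {w} (hxw : x ≤ w) (hwy : w ≤ y) : w ∈ Set.Ioo (0 : ℝ) 1 :=
    ⟨hx.trans_le hxw, hwy.trans_lt hy⟩
  have pos {w} (hw : w ∈ Set.Ioo (0 : ℝ) 1) : 0 < w ^ a * (1 - w) ^ b := by
    have := sub_pos.2 hw.2; have := hw.1; positivity
  have hmin := (concaveOn_log_pow_mul_one_sub_pow a b).min_le_of_mem_Icc
    (mem le_rfl hxy) (mem hxy le_rfl) hz
  rw [min_le_iff] at hmin ⊢
  have hz' := pos (mem hz.1 hz.2)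
  exact hmin.imp (log_le_log_iff (pos (mem le_rfl hxy)) hz').1
    (log_le_log_iff (pos (mem hxy le_rfl)) hz').1

theorem div_pow_mul_one_sub_div_pow {a b n : ℕ} (hab : a + b = n) (hn : n ≠ 0) (α β : ℕ) :
    ((a : ℝ) / n) ^ α * (1 - a / n) ^ β * n ^ (α + β) = a ^ α * b ^ β := by
  have hn' : (n : ℝ) ≠ 0 := by exact_mod_cast hn
  have hb : (n : ℝ) - a = b := by rw [← hab]; push_cast; ring
  rw [one_sub_div hn', hb, div_pow, div_pow, pow_add]
  field_simp

-- `n = k + j + 1` and `m = k + 1`, so that no truncated subtraction occurs.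
section
variable {k j : ℕ}

theorem half_le_choose_sq_mul_at_left (hk : k ≠ 0) :
    (k + j + 1 : ℝ) / 2 ≤ 4 * (k + 1) ^ 2 * ((k + j + 1).choose (k + 1) : ℝ) ^ 2 *
      ((k / (k + j + 1) : ℝ) ^ (2 * k + 1) * (1 - k / (k + j + 1)) ^ (2 * j + 1)) := by
  have hKL : (k + j + 1 : ℝ) ^ (2 * (k + j + 1) + 1) ≤
      8 * k ^ (2 * k + 1) * (j + 1) ^ (2 * (j + 1) + 1) * ((k + j + 1).choose k : ℝ) ^ 2 := by
    have := add_pow_le_choose_sq hk (by omega : j + 1 ≠ 0)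
    rw [← add_assoc] at this
    exact_mod_cast this
  have hchoose : ((k + j + 1).choose (k + 1) : ℝ) * (k + 1) = (k + j + 1).choose k * (j + 1) := by
    have := Nat.choose_succ_right_eq (k + j + 1) k
    rw [show k + j + 1 - k = j + 1 by omega] at this
    exact_mod_cast this
  have hscale := div_pow_mul_one_sub_div_pow (show k + (j + 1) = k + j + 1 by omega) (by omega)
    (2 * k + 1) (2 * j + 1)
  push_cast at hscale
  rw [div_le_iff₀ two_pos]
  refine le_of_mul_le_mul_right ?_ (pow_pos (by positivity : (0 : ℝ) < k + j + 1)
    (2 * k + 1 + (2 * j + 1)))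
  calc (k + j + 1 : ℝ) * (k + j + 1) ^ (2 * k + 1 + (2 * j + 1))
      = (k + j + 1 : ℝ) ^ (2 * (k + j + 1) + 1) := by
        rw [← pow_succ']; congr 1; omega
    _ ≤ _ := hKL
    _ = 8 * (((k + j + 1).choose (k + 1) : ℝ) * (k + 1)) ^ 2 *
          (k ^ (2 * k + 1) * (j + 1) ^ (2 * j + 1)) := by
        rw [hchoose]; ring
    _ = _ := by rw [← hscale]; ring

theorem half_le_choose_sq_mul_at_right (hj : j ≠ 0) :
    (k + j + 1 : ℝ) / 2 ≤ 4 * (k + 1) ^ 2 * ((k + j + 1).choose (k + 1) : ℝ) ^ 2 *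
      (((k + 1) / (k + j + 1) : ℝ) ^ (2 * k + 1) * (1 - (k + 1) / (k + j + 1)) ^ (2 * j + 1)) := by
  have hKL : (k + j + 1 : ℝ) ^ (2 * (k + j + 1) + 1) ≤
      8 * (k + 1) ^ (2 * (k + 1) + 1) * j ^ (2 * j + 1) * ((k + j + 1).choose (k + 1) : ℝ) ^ 2 := by
    have := add_pow_le_choose_sq (by omega : k + 1 ≠ 0) hj
    rw [Nat.add_right_comm] at this
    exact_mod_cast this
  have hscale := div_pow_mul_one_sub_div_pow (show k + 1 + j = k + j + 1 by omega) (by omega)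
    (2 * k + 1) (2 * j + 1)
  push_cast at hscale
  rw [div_le_iff₀ two_pos]
  refine le_of_mul_le_mul_right ?_ (pow_pos (by positivity : (0 : ℝ) < k + j + 1)
    (2 * k + 1 + (2 * j + 1)))
  calc (k + j + 1 : ℝ) * (k + j + 1) ^ (2 * k + 1 + (2 * j + 1))
      = (k + j + 1 : ℝ) ^ (2 * (k + j + 1) + 1) := by
        rw [← pow_succ']; congr 1; omega
    _ ≤ _ := hKL
    _ = 8 * (k + 1) ^ 2 * ((k + j + 1).choose (k + 1) : ℝ) ^ 2 *
          ((k + 1) ^ (2 * k + 1) * j ^ (2 * j + 1)) := by ring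
    _ = _ := by rw [← hscale]; ring

theorem half_le_choose_sq_mul (hk : k ≠ 0) {p : ℝ} (hp₁ : k ≤ (k + j + 1) * p)
    (hp₂ : (k + j + 1) * p ≤ k + 1) (hp₃ : (k + j + 1) * p ≤ k + j) :
    (k + j + 1 : ℝ) / 2 ≤ 4 * (k + 1) ^ 2 * ((k + j + 1).choose (k + 1) : ℝ) ^ 2 *
      (p ^ (2 * k + 1) * (1 - p) ^ (2 * j + 1)) := by
  have hn : (0 : ℝ) < k + j + 1 := by positivity
  by_cases hj : j = 0
  · have : p = k / (k + j + 1) := by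
      rw [eq_div_iff hn.ne']; simp only [hj, CharP.cast_eq_zero, add_zero] at hp₁ hp₃ ⊢; linarith
    rw [this]
    exact half_le_choose_sq_mul_at_left hk
  have hj' : (1 : ℝ) ≤ j := by exact_mod_cast Nat.one_le_iff_ne_zero.2 hj
  have hpk : p ∈ Set.Icc ((k : ℝ) / (k + j + 1)) ((k + 1) / (k + j + 1)) :=
    ⟨(div_le_iff₀ hn).2 (by linarith), (le_div_iff₀ hn).2 (by linarith)⟩
  have hmin := min_le_pow_mul_one_sub_pow (2 * k + 1) (2 * j + 1) (by positivity)
    ((div_lt_one hn).2 (by linarith)) hpk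
  calc (k + j + 1 : ℝ) / 2
      ≤ min (4 * (k + 1) ^ 2 * ((k + j + 1).choose (k + 1) : ℝ) ^ 2 * _)
          (4 * (k + 1) ^ 2 * ((k + j + 1).choose (k + 1) : ℝ) ^ 2 * _) :=
        le_min (half_le_choose_sq_mul_at_left hk) (half_le_choose_sq_mul_at_right hj)
    _ ≤ _ := by rw [← mul_min_of_nonneg _ _ (by positivity)]; gcongr

theorem sqrt_mul_div_sqrt_two_le (hk : k ≠ 0) {p : ℝ} (hp₁ : k ≤ (k + j + 1) * p)
    (hp₂ : (k + j + 1) * p ≤ k + 1) (hp₃ : (k + j + 1) * p ≤ k + j) :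
    √((k + j + 1) * p * (1 - p)) / √2 ≤
      2 * (k + 1) * (1 - p) * ((k + j + 1).choose (k + 1) * p ^ (k + 1) * (1 - p) ^ j) := by
  have hp : 0 ≤ p := by
    by_contra! h; have : (0 : ℝ) < k := by positivity
    nlinarith
  have hq : 0 ≤ 1 - p := by nlinarith
  rw [← sqrt_div' _ zero_le_two, sqrt_le_left (by positivity)]
  calc (k + j + 1 : ℝ) * p * (1 - p) / 2 = p * (1 - p) * ((k + j + 1) / 2) := by ring
    _ ≤ p * (1 - p) * (4 * (k + 1) ^ 2 * ((k + j + 1).choose (k + 1) : ℝ) ^ 2 *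
          (p ^ (2 * k + 1) * (1 - p) ^ (2 * j + 1))) := by
        gcongr; exact half_le_choose_sq_mul hk hp₁ hp₂ hp₃
    _ = _ := by ring
end

/-- For `Y ~ Binomial(n, p)` with `n ≥ 2` and `1/n ≤ p ≤ 1 - 1/n`, the mean absolute
deviation of `Y` is at least `std(Y)/√2`, where `std(Y) = √(np(1-p))`. -/
theorem stmt_4 (n : ℕ) (p : ℝ) (hn : 2 ≤ n) (hp₁ : 1 / (n : ℝ) ≤ p)
    (hp₂ : p ≤ 1 - 1 / (n : ℝ)) :
    Real.sqrt ((n : ℝ) * p * (1 - p)) / Real.sqrt 2 ≤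
      ∑ i ∈ Finset.range (n + 1),
        (n.choose i : ℝ) * p ^ i * (1 - p) ^ (n - i) * |(i : ℝ) - (n : ℝ) * p| := by
  have hn₀ : (0 : ℝ) < n := by exact_mod_cast (by omega : 0 < n)
  have hnp₁ : 1 ≤ n * p := by rwa [div_le_iff₀' hn₀] at hp₁
  have hnp₂ : n * p ≤ n - 1 := by
    have := mul_le_mul_of_nonneg_left hp₂ hn₀.le
    rwa [mul_sub, mul_one, mul_one_div_cancel hn₀.ne'] at this
  obtain ⟨k, hk, hkn, hk₁, hk₂⟩ : ∃ k : ℕ, k ≠ 0 ∧ k < n ∧ (k : ℝ) ≤ n * p ∧ n * p ≤ k + 1 :=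
    ⟨⌊n * p⌋₊, Nat.one_le_iff_ne_zero.1 ((Nat.one_le_floor_iff _).2 hnp₁),
      (Nat.floor_lt (by positivity)).2 (by linarith), Nat.floor_le (by positivity),
      (Nat.lt_floor_add_one _).le⟩
  obtain ⟨j, rfl⟩ : ∃ j, n = k + j + 1 := ⟨n - k - 1, by omega⟩
  push_cast at hk₁ hk₂ hnp₂
  rw [sum_choose_mul_abs_sub_eq _ (k + 1) p (by omega) (by push_cast; linarith)
    (by push_cast; linarith), show k + j + 1 - (k + 1) = j by omega]
  push_cast
  exact sqrt_mul_div_sqrt_two_le hk hk₁ hk₂ (by linarith)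
end

section
/- If X ~ Binomial(n, n_e/n) with 1 ≤ n_e ≤ n/2 and n ≥ 2, then E|X - n_e| ≥ √(n_e)/2. -/
/-!
For `p = k / n` the mean absolute deviation has de Moivre's closed form
`E|X - k| = 2 k C(n, k) p^k (1 - p)^(n - k + 1)`: write `|i - k|` as `(i - k)`, whose mean vanishes,
plus twice the negative part, whose partial sums telescope. Divided by `2k` this is nondecreasing
in `n`, since consecutive values have ratio `g(n - k) / g(n)` with `g(m) = (1 + 1/m)^(m + 1)`
decreasing (Bernoulli's inequality). Hence it is at least its value `k C(2k, k) / 4^k` at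
`n = 2k`, which is `≥ √k / 2` because `16^k ≤ 4k C(2k, k)^2`.
-/

open Finset

section BinomialSums

variable {R : Type*} [CommRing R]

theorem sum_choose_mul_pow_mul_sub (n : ℕ) (p c : R) :
    ∑ i ∈ range (n + 1), (n.choose i : R) * p ^ i * (1 - p) ^ (n - i) * (i - c) =
      n * p - c := by
  have hmass := congrArg (Polynomial.eval p) (bernsteinPolynomial.sum R n)
  have hmean := congrArg (Polynomial.eval p) (bernsteinPolynomial.sum_smul (R := R) n)
  simp only [Polynomial.eval_finsetSum, bernsteinPolynomial, Polynomial.eval_mul,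
    Polynomial.eval_pow, Polynomial.eval_sub, Polynomial.eval_X, Polynomial.eval_one,
    Polynomial.eval_natCast, nsmul_eq_mul] at hmass hmean
  simp only [mul_sub, sum_sub_distrib, ← sum_mul, hmass, one_mul]
  rw [← hmean]
  congr 1
  exact sum_congr rfl fun i _ => by ring

theorem sum_range_choose_mul_pow_mul_sub_of_le {n m : ℕ} (hm : m ≤ n) (p : R) :
    ∑ i ∈ range m, (n.choose i : R) * p ^ i * (1 - p) ^ (n - i) * (n * p - i) =
      m * n.choose m * p ^ m * (1 - p) ^ (n - m + 1) := by
  induction m with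
  | zero => simp
  | succ m ih =>
    rw [sum_range_succ, ih (by omega), show n - (m + 1) + 1 = n - m by omega, pow_succ _ (n - m)]
    have hchoose := congrArg (Nat.cast : ℕ → R) (Nat.choose_succ_right_eq n m)
    push_cast [Nat.cast_sub (by omega : m ≤ n)] at hchoose ⊢
    linear_combination (-(p ^ (m + 1) * (1 - p) ^ (n - m))) * hchoose

end BinomialSums

theorem sum_choose_mul_pow_mul_abs_sub {n k : ℕ} (hkn : k ≤ n) {p : ℝ} (hp : n * p = k) :
    ∑ i ∈ range (n + 1), (n.choose i : ℝ) * p ^ i * (1 - p) ^ (n - i) * |(i : ℝ) - k| =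
      2 * k * n.choose k * p ^ k * (1 - p) ^ (n - k + 1) := by
  have hsplit : ∀ i ∈ range (n + 1),
      (n.choose i : ℝ) * p ^ i * (1 - p) ^ (n - i) * |(i : ℝ) - k| =
        (n.choose i : ℝ) * p ^ i * (1 - p) ^ (n - i) * (i - k) +
          2 * if i < k then (n.choose i : ℝ) * p ^ i * (1 - p) ^ (n - i) * (n * p - i)
            else 0 := by
    intro i _
    split_ifs with hik
    · have : (i : ℝ) < k := by exact_mod_cast hik
      rw [hp, abs_of_neg (by linarith)]
      ring
    · have : (k : ℝ) ≤ i := by exact_mod_cast not_lt.1 hik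
      rw [abs_of_nonneg (by linarith)]
      ring
  have hfilter : (range (n + 1)).filter (· < k) = range k := by
    ext i; simp only [mem_filter, mem_range]; omega
  rw [sum_congr rfl hsplit, sum_add_distrib, ← mul_sum, sum_ite, sum_const_zero, add_zero,
    hfilter, sum_choose_mul_pow_mul_sub, sum_range_choose_mul_pow_mul_sub_of_le hkn, hp]
  ring

theorem one_add_inv_pow_succ_antitoneOn :
    AntitoneOn (fun m : ℕ => (1 + (m : ℝ)⁻¹) ^ (m + 1)) (Set.Ici 1) := by
  refine antitoneOn_nat_Ici_of_succ_le fun m hm => ?_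
  have hm : (0 : ℝ) < m := by exact_mod_cast hm
  set ε : ℝ := ((m : ℝ) * (m + 2))⁻¹ with hε
  have hfactor : 1 + (m : ℝ)⁻¹ = (1 + ε) * (1 + ((m + 1 : ℕ) : ℝ)⁻¹) := by
    rw [hε]; push_cast; field_simp; ring
  have hbernoulli : 1 + (m : ℝ)⁻¹ ≤ (1 + ε) ^ (m + 2) :=
    calc 1 + (m : ℝ)⁻¹ = 1 + ((m + 2 : ℕ) : ℝ) * ε := by rw [hε]; push_cast; field_simp
      _ ≤ (1 + ε) ^ (m + 2) := one_add_mul_le_pow (by linarith [show 0 ≤ ε by positivity]) _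
  have key : (1 + (m : ℝ)⁻¹) * (1 + ((m + 1 : ℕ) : ℝ)⁻¹) ^ (m + 1 + 1) ≤
      (1 + (m : ℝ)⁻¹) * (1 + (m : ℝ)⁻¹) ^ (m + 1) :=
    calc (1 + (m : ℝ)⁻¹) * (1 + ((m + 1 : ℕ) : ℝ)⁻¹) ^ (m + 1 + 1)
        ≤ (1 + ε) ^ (m + 2) * (1 + ((m + 1 : ℕ) : ℝ)⁻¹) ^ (m + 2) := by gcongr
      _ = (1 + (m : ℝ)⁻¹) * (1 + (m : ℝ)⁻¹) ^ (m + 1) := by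
        rw [← mul_pow, ← hfactor, pow_succ']
  exact le_of_mul_le_mul_left key (by positivity)

theorem pow_div_pow_le_succ_pow_div_succ_pow {m n : ℕ} (hm : 0 < m) (hmn : m ≤ n) :
    (m : ℝ) ^ (m + 1) / n ^ (n + 1) ≤ ((m : ℝ) + 1) ^ (m + 1) / (n + 1) ^ (n + 1) := by
  have h := one_add_inv_pow_succ_antitoneOn (Set.mem_Ici.2 hm) (Set.mem_Ici.2 (hm.trans_le hmn)) hmn
  have hm' : (0 : ℝ) < m := by exact_mod_cast hm
  have hn : (0 : ℝ) < n := hm'.trans_le (by exact_mod_cast hmn)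
  have one_add_inv : ∀ x : ℝ, 0 < x → 1 + x⁻¹ = (x + 1) / x := fun x hx => by field_simp
  simp only [one_add_inv _ hm', one_add_inv _ hn, div_pow] at h
  rw [div_le_div_iff₀ (by positivity) (by positivity)] at h ⊢
  linarith

noncomputable def deMoivreTerm (k n : ℕ) : ℝ :=
  n.choose k * ((k : ℝ) / n) ^ k * (1 - (k : ℝ) / n) ^ (n - k + 1)

theorem deMoivreTerm_add {k m : ℕ} (h : 0 < k + m) :
    deMoivreTerm k (k + m) =
      (k + m).choose k * k ^ k * (m ^ (m + 1) / ((k + m : ℕ) : ℝ) ^ (k + m + 1)) := by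
  have hq : 1 - (k : ℝ) / (k + m : ℕ) = m / (k + m : ℕ) := by field_simp; push_cast; ring
  rw [deMoivreTerm, Nat.add_sub_cancel_left, hq, div_pow, div_pow, mul_assoc, div_mul_div_comm,
    ← pow_add, mul_div_assoc, show k + (m + 1) = k + m + 1 by omega, ← mul_assoc]

theorem deMoivreTerm_le_succ {k m : ℕ} (hm : 0 < m) :
    deMoivreTerm k (k + m) ≤ deMoivreTerm k (k + m + 1) := by
  have hchoose : ((k + m + 1).choose k : ℝ) * (m + 1) = (k + m).choose k * (k + m + 1) := by
    have := Nat.choose_mul_succ_eq (k + m) k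
    rw [show k + m + 1 - k = m + 1 by omega] at this
    exact_mod_cast this.symm
  have hpow := pow_div_pow_le_succ_pow_div_succ_pow hm (Nat.le_add_left m k)
  rw [deMoivreTerm_add (by omega), add_assoc, deMoivreTerm_add (by omega), ← add_assoc]
  push_cast at hpow ⊢
  calc ((k + m).choose k : ℝ) * k ^ k * (m ^ (m + 1) / (k + m) ^ (k + m + 1))
      ≤ (k + m).choose k * k ^ k * ((m + 1) ^ (m + 1) / (k + m + 1) ^ (k + m + 1)) := by gcongr
    _ = (k + m + 1).choose k * k ^ k * ((m + 1) ^ (m + 1 + 1) / (k + m + 1) ^ (k + m + 1 + 1)) := by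
      rw [pow_succ _ (m + 1), pow_succ _ (k + m + 1)]
      field_simp
      linear_combination -hchoose

theorem deMoivreTerm_monotoneOn (k : ℕ) : MonotoneOn (deMoivreTerm k) (Set.Ici (k + 1)) := by
  refine monotoneOn_nat_Ici_of_le_succ fun n hn => ?_
  obtain ⟨m, rfl⟩ : ∃ m, n = k + m := ⟨n - k, by omega⟩
  exact deMoivreTerm_le_succ (by omega)

theorem two_mul_mul_deMoivreTerm_two_mul {k : ℕ} (hk : 0 < k) :
    2 * k * deMoivreTerm k (2 * k) = k * k.centralBinom / 4 ^ k := by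
  have hk : (k : ℝ) ≠ 0 := by positivity
  have hhalf : (k : ℝ) / (2 * k : ℕ) = 1 / 2 := by push_cast; field_simp
  rw [deMoivreTerm, hhalf, Nat.centralBinom_eq_two_mul_choose, show 2 * k - k + 1 = k + 1 by omega,
    show (1 : ℝ) - 1 / 2 = 1 / 2 by norm_num, show (4 : ℝ) = 2 * 2 by norm_num]
  simp only [div_pow, one_pow, mul_pow]
  field_simp
  ring

theorem four_pow_sq_le_four_mul_mul_centralBinom_sq {k : ℕ} (hk : 0 < k) :
    (4 ^ k) ^ 2 ≤ 4 * k * k.centralBinom ^ 2 := by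
  induction k, hk using Nat.le_induction with
  | base => decide
  | succ k _ ih =>
    have hrec : (k + 1) * (4 * (k + 1) * (k + 1).centralBinom ^ 2) =
        16 * (2 * k + 1) ^ 2 * k.centralBinom ^ 2 := by
      rw [show (k + 1) * (4 * (k + 1) * (k + 1).centralBinom ^ 2) =
        4 * ((k + 1) * (k + 1).centralBinom) ^ 2 by ring, Nat.succ_mul_centralBinom_succ]
      ring
    refine le_of_mul_le_mul_left ?_ k.succ_pos
    rw [hrec]
    calc (k + 1) * (4 ^ (k + 1)) ^ 2 = 16 * (k + 1) * (4 ^ k) ^ 2 := by ring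
      _ ≤ 16 * (k + 1) * (4 * k * k.centralBinom ^ 2) := by gcongr
      _ ≤ 16 * (2 * k + 1) ^ 2 * k.centralBinom ^ 2 := by
        nlinarith [Nat.zero_le (k.centralBinom ^ 2)]

theorem sqrt_div_two_le_mul_centralBinom_div_four_pow {k : ℕ} (hk : 0 < k) :
    √(k : ℝ) / 2 ≤ k * k.centralBinom / 4 ^ k := by
  have h : ((4 : ℝ) ^ k) ^ 2 ≤ 4 * k * k.centralBinom ^ 2 := by
    exact_mod_cast four_pow_sq_le_four_mul_mul_centralBinom_sq hk
  rw [div_le_div_iff₀ two_pos (by positivity)]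
  refine (pow_le_pow_iff_left₀ (by positivity) (by positivity) two_ne_zero).1 ?_
  rw [mul_pow, Real.sq_sqrt k.cast_nonneg]
  nlinarith [k.cast_nonneg (α := ℝ)]

theorem stmt_6_general (n nₑ : ℕ) (h₁ : 1 ≤ nₑ) (h₂ : 2 * nₑ ≤ n) :
    Real.sqrt (nₑ : ℝ) / 2 ≤
      ∑ i ∈ Finset.range (n + 1),
        (n.choose i : ℝ) * ((nₑ : ℝ) / n) ^ i * (1 - (nₑ : ℝ) / n) ^ (n - i) *
          |(i : ℝ) - (nₑ : ℝ)| := by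
  have hmean : (n : ℝ) * (nₑ / n) = nₑ := mul_div_cancel₀ _ (by norm_cast; omega)
  rw [sum_choose_mul_pow_mul_abs_sub (by omega) hmean]
  calc √(nₑ : ℝ) / 2 ≤ nₑ * nₑ.centralBinom / 4 ^ nₑ :=
        sqrt_div_two_le_mul_centralBinom_div_four_pow h₁
    _ = 2 * nₑ * deMoivreTerm nₑ (2 * nₑ) := (two_mul_mul_deMoivreTerm_two_mul h₁).symm
    _ ≤ 2 * nₑ * deMoivreTerm nₑ n := by
      gcongr
      exact deMoivreTerm_monotoneOn nₑ (Set.mem_Ici.2 (by omega)) (Set.mem_Ici.2 (by omega)) h₂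
    _ = _ := by rw [deMoivreTerm]; ring

/-- If `X ~ Binomial(n, n_e/n)` with `1 ≤ n_e ≤ n/2` and `n ≥ 2`, then
`E|X - n_e| ≥ √(n_e)/2`. -/
theorem stmt_6 (n nₑ : ℕ) (hn : 2 ≤ n) (h₁ : 1 ≤ nₑ) (h₂ : 2 * nₑ ≤ n) :
    Real.sqrt (nₑ : ℝ) / 2 ≤
      ∑ i ∈ Finset.range (n + 1),
        (n.choose i : ℝ) * ((nₑ : ℝ) / n) ^ i * (1 - (nₑ : ℝ) / n) ^ (n - i) *
          |(i : ℝ) - (nₑ : ℝ)| :=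
  stmt_6_general n nₑ h₁ h₂
end

section
/- Let P(T) denote the optimal value of a convex program min f(x, χ_T) subject to convex constraints g_i(x, χ_T) ≤ 0 and affine constraints h_j(x, χ_T) = 0, where χ_T is the multiplicity vector of a multiset T with elements from a finite set S. Then the expectation of P(S_k) when S_k is a uniformly random k-subset of S (without replacement) is at most the expectation of P(S_k) when S_k consists of k i.i.d. uniform draws from S (with replacement). -/
/-!
Couple the two samples: draw `M` uniformly from `S^k`, then let `T` be a uniformly random
`k`-subset containing the values of `M`. By symmetry under permutations of `S`, `T` is then a
uniform `k`-subset and, conditionally on `T`, the expected multiplicity vector of `M` is the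
indicator of `T`. The optimal value of a convex program is a convex function of the parameter
(average optimal solutions), so Jensen's inequality conditionally on `T` gives
`P(T) ≤ E[P(M) | T]`; averaging over `T` gives the claim.
-/

open Finset

theorem le_sum_of_isLeast_convexProgram {E F β γ ιg ιh : Type*}
    [AddCommGroup E] [Module ℝ E] [AddCommGroup F] [Module ℝ F]
    {f : E × F → ℝ} {g : ιg → E × F → ℝ} {h : ιh → E × F → ℝ}
    (hf : ConvexOn ℝ Set.univ f) (hg : ∀ i, ConvexOn ℝ Set.univ (g i))
    (hh : ∀ j, ∃ (L : E × F →ₗ[ℝ] ℝ) (c : ℝ), ∀ z, h j z = L z + c)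
    {e : β → F} {P : β → ℝ}
    (hP : ∀ b, IsLeast {v | ∃ x, (∀ i, g i (x, e b) ≤ 0) ∧ (∀ j, h j (x, e b) = 0) ∧
      v = f (x, e b)} (P b))
    {s : Finset γ} {w : γ → ℝ} {a : γ → β} {b : β}
    (hw₀ : ∀ c ∈ s, 0 ≤ w c) (hw₁ : ∑ c ∈ s, w c = 1) (hb : e b = ∑ c ∈ s, w c • e (a c)) :
    P b ≤ ∑ c ∈ s, w c * P (a c) := by
  choose x hgx hhx hfx using fun b => (hP b).1
  set z : E × F := ∑ c ∈ s, w c • (x (a c), e (a c))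
  have hz : z = (z.1, e b) := Prod.ext rfl (by simp only [z, hb, Prod.snd_sum, Prod.smul_snd])
  have hgz (i) : g i z ≤ 0 :=
    ((hg i).map_sum_le hw₀ hw₁ fun _ _ => trivial).trans <|
      sum_nonpos fun c hc => smul_nonpos_of_nonneg_of_nonpos (hw₀ c hc) (hgx _ i)
  have hhz (j) : h j z = 0 := by
    obtain ⟨L, d, hL⟩ := hh j
    have hzero (c) : L (x (a c), e (a c)) = -d := by linarith [hL (x (a c), e (a c)), hhx (a c) j]
    simp only [hL, z, map_sum, map_smul, hzero, smul_eq_mul, ← sum_mul, hw₁]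
    ring
  calc P b ≤ f z := (hP b).2 ⟨z.1, fun i => hz ▸ hgz i, fun j => hz ▸ hhz j, by rw [← hz]⟩
    _ ≤ ∑ c ∈ s, w c • f (x (a c), e (a c)) := hf.map_sum_le hw₀ hw₁ fun _ _ => trivial
    _ = ∑ c ∈ s, w c * P (a c) := by simp only [smul_eq_mul, hfx]

open Fintype Equiv
open scoped Pointwise

lemma swap_smul_finset_eq_self {α : Type*} [DecidableEq α] {T : Finset α} {a b : α}
    (ha : a ∈ T) (hb : b ∈ T) : swap a b • T = T := by
  ext x
  rw [← inv_smul_mem_iff]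
  simp only [Perm.smul_def, swap_inv, swap_apply_def]
  grind

section Coupling

variable {α ι : Type*} [Fintype α] [DecidableEq α] [Fintype ι]

/-- `couplingWeight M T` is the conditional probability of `T` given `M` in the coupling. -/
noncomputable def couplingWeight (M : ι → α) (T : Finset α) : ℝ :=
  if image M univ ⊆ T then (#{T' ∈ powersetCard (card ι) univ | image M univ ⊆ T'} : ℝ)⁻¹
  else 0

lemma couplingWeight_nonneg (M : ι → α) (T : Finset α) : 0 ≤ couplingWeight M T := by
  unfold couplingWeight; split_ifs <;> positivity

lemma sum_couplingWeight_powersetCard (hk : card ι ≤ card α) (M : ι → α) :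
    ∑ T ∈ powersetCard (card ι) univ, couplingWeight M T = 1 := by
  obtain ⟨T, hMT, hT⟩ := exists_superset_card_eq ((card_image_le).trans_eq card_univ) hk
  unfold couplingWeight
  rw [← sum_filter, sum_const, nsmul_eq_mul]
  refine mul_inv_cancel₀ (Nat.cast_ne_zero.2 (card_ne_zero_of_mem (mem_filter.2 ⟨?_, hMT⟩)))
  simpa [mem_powersetCard] using hT

lemma couplingWeight_perm (σ : Perm α) (M : ι → α) (T : Finset α) :
    couplingWeight (σ ∘ M) (σ • T) = couplingWeight M T := by
  have himage : image (σ ∘ M) univ = σ • image M univ := by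
    rw [← image_image]; rfl
  have hsuper (D : Finset α) (hD : #D ≤ card ι) :
      #{T' ∈ powersetCard (card ι) univ | σ • D ⊆ T'} =
        #{T' ∈ powersetCard (card ι) univ | D ⊆ T'} := by
    rw [card_filter_powersetCard_subset _ _ _ (subset_univ _) (by rwa [card_smul_finset]),
      card_filter_powersetCard_subset _ _ _ (subset_univ _) hD, card_smul_finset]
  simp only [couplingWeight, himage, smul_finset_subset_smul_finset_iff,
    hsuper _ ((card_image_le).trans_eq card_univ)]

lemma sum_couplingWeight_smul_mul [DecidableEq ι] (σ : Perm α) (T : Finset α)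
    (G : (ι → α) → ℝ) :
    ∑ M, couplingWeight M (σ • T) * G M = ∑ M, couplingWeight M T * G (σ ∘ M) := by
  rw [← ((Equiv.refl ι).arrowCongr σ).sum_comp]
  exact sum_congr rfl fun M _ => by rw [← couplingWeight_perm σ M T]; rfl

lemma sum_couplingWeight_eq [DecidableEq ι] (hk : card ι ≤ card α) {T : Finset α}
    (hT : T ∈ powersetCard (card ι) univ) :
    ∑ M : ι → α, couplingWeight M T = (card α ^ card ι / (card α).choose (card ι) : ℝ) := by
  have hconst : ∀ T' ∈ powersetCard (card ι) univ,
      ∑ M : ι → α, couplingWeight M T' = ∑ M : ι → α, couplingWeight M T := by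
    intro T' hT'
    obtain ⟨σ, hσ⟩ := (Set.powersetCard.isPretransitive (α := α) (n := card ι)).exists_smul_eq
      ⟨T, by simpa using hT⟩ ⟨T', by simpa using hT'⟩
    have hσT : σ • T = T' := congrArg Subtype.val hσ
    simpa [hσT] using sum_couplingWeight_smul_mul σ T fun _ => 1
  have htotal : ∑ T' ∈ powersetCard (card ι) univ, ∑ M : ι → α, couplingWeight M T' =
      card α ^ card ι := by
    rw [sum_comm, sum_congr rfl fun M _ => sum_couplingWeight_powersetCard hk M]
    simp
  rw [sum_congr rfl hconst, sum_const, card_powersetCard, card_univ, nsmul_eq_mul] at htotal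
  have hC : ((card α).choose (card ι) : ℝ) ≠ 0 := Nat.cast_ne_zero.2 (Nat.choose_pos hk).ne'
  rw [← htotal, mul_div_cancel_left₀ _ hC]

lemma image_subset_of_couplingWeight_ne_zero {M : ι → α} {T : Finset α}
    (h : couplingWeight M T ≠ 0) : image M univ ⊆ T := by
  by_contra hMT
  exact h (if_neg hMT)

lemma sum_couplingWeight_mul_count_of_notMem [DecidableEq ι] {T : Finset α} {a : α}
    (ha : a ∉ T) : ∑ M : ι → α, couplingWeight M T * #{i | M i = a} = 0 := by
  refine sum_eq_zero fun M _ => ?_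
  by_cases hw : couplingWeight M T = 0
  · rw [hw, zero_mul]
  have hMT := image_subset_of_couplingWeight_ne_zero hw
  have : #{i | M i = a} = 0 :=
    card_eq_zero.2 <| filter_eq_empty_iff.2 fun i _ hi =>
      ha (hi ▸ hMT (mem_image_of_mem M (mem_univ i)))
  simp [this]

lemma sum_couplingWeight_mul_count_of_mem [DecidableEq ι] {T : Finset α}
    (hT : T ∈ powersetCard (card ι) univ) {a : α} (ha : a ∈ T) :
    ∑ M : ι → α, couplingWeight M T * #{i | M i = a} = ∑ M : ι → α, couplingWeight M T := by
  rw [mem_powersetCard_univ] at hT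
  have hswap : ∀ b ∈ T, ∑ M : ι → α, couplingWeight M T * #{i | M i = b} =
      ∑ M : ι → α, couplingWeight M T * #{i | M i = a} := by
    intro b hb
    have := sum_couplingWeight_smul_mul (swap a b) T fun M : ι → α => (#{i | M i = b} : ℝ)
    simpa [swap_smul_finset_eq_self ha hb, swap_apply_eq_iff] using this
  have htotal : ∑ b ∈ T, ∑ M : ι → α, couplingWeight M T * #{i | M i = b} =
      card ι * ∑ M : ι → α, couplingWeight M T := by
    rw [sum_comm, mul_sum]
    refine sum_congr rfl fun M _ => ?_
    by_cases hw : couplingWeight M T = 0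
    · simp [hw]
    have hMT := image_subset_of_couplingWeight_ne_zero hw
    rw [← mul_sum, ← Nat.cast_sum,
      ← card_eq_sum_card_fiberwise fun i _ => hMT (mem_image_of_mem M (mem_univ i)),
      card_univ, mul_comm]
  rw [sum_congr rfl hswap, sum_const, hT, nsmul_eq_mul] at htotal
  exact mul_left_cancel₀ (Nat.cast_ne_zero.2 (hT ▸ card_ne_zero_of_mem ha)) htotal

end Coupling

theorem sum_powersetCard_div_choose_le_sum_pi_div_pow {α ι : Type*} [Fintype α] [DecidableEq α]
    [Fintype ι] [DecidableEq ι] (hk : card ι ≤ card α) {P : (α → ℕ) → ℝ}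
    (hP : ∀ (w : (ι → α) → ℝ) (χ : α → ℕ), (∀ M, 0 ≤ w M) → ∑ M, w M = 1 →
      (fun a => (χ a : ℝ)) = ∑ M, w M • (fun a => (#{i | M i = a} : ℝ)) →
      P χ ≤ ∑ M, w M * P (fun a => #{i | M i = a})) :
    (∑ T ∈ powersetCard (card ι) univ, P (fun a => if a ∈ T then 1 else 0)) /
        ((card α).choose (card ι) : ℝ) ≤
      (∑ M : ι → α, P (fun a => #{i | M i = a})) / (card α : ℝ) ^ card ι := by
  set C : ℝ := ((card α).choose (card ι) : ℝ)
  set N : ℝ := (card α : ℝ) ^ card ι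
  have hC : 0 < C := Nat.cast_pos.2 (Nat.choose_pos hk)
  have hN : 0 < N := by
    rcases (card ι).eq_zero_or_pos with h | h
    · simp [N, h]
    · exact pow_pos (Nat.cast_pos.2 (h.trans_le hk)) _
  have hCN : C / N * (N / C) = 1 := by field_simp
  have hjensen : ∀ T ∈ powersetCard (card ι) univ, P (fun a => if a ∈ T then 1 else 0) ≤
      ∑ M : ι → α, C / N * couplingWeight M T * P (fun a => #{i | M i = a}) := by
    intro T hT
    refine hP _ _ (fun M => mul_nonneg (by positivity) (couplingWeight_nonneg M T)) ?_ ?_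
    · rw [← mul_sum, sum_couplingWeight_eq hk hT]
      exact hCN
    · funext a
      simp only [Finset.sum_apply, Pi.smul_apply, smul_eq_mul, mul_assoc, ← mul_sum]
      by_cases ha : a ∈ T
      · rw [sum_couplingWeight_mul_count_of_mem hT ha, sum_couplingWeight_eq hk hT]
        simpa [ha] using hCN.symm
      · simp [sum_couplingWeight_mul_count_of_notMem ha, ha]
  calc (∑ T ∈ powersetCard (card ι) univ, P (fun a => if a ∈ T then 1 else 0)) / C
      ≤ (∑ T ∈ powersetCard (card ι) univ,
          ∑ M : ι → α, C / N * couplingWeight M T * P (fun a => #{i | M i = a})) / C := by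
        gcongr with T hT
        exact hjensen T hT
    _ = (∑ M : ι → α, P (fun a => #{i | M i = a})) / N := by
        simp only [sum_comm (s := powersetCard _ _), mul_comm (C / N), mul_assoc,
          ← sum_mul, sum_couplingWeight_powersetCard hk, one_mul]
        field_simp

theorem stmt_11_general (n d m l k : ℕ) (hk : k ≤ n)
    (f : ((Fin d → ℝ) × (Fin n → ℝ)) → ℝ)
    (g : Fin m → ((Fin d → ℝ) × (Fin n → ℝ)) → ℝ)
    (h : Fin l → ((Fin d → ℝ) × (Fin n → ℝ)) → ℝ)
    (hf : ConvexOn ℝ Set.univ f)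
    (hg : ∀ i, ConvexOn ℝ Set.univ (g i))
    (hh : ∀ j, ∃ (L : ((Fin d → ℝ) × (Fin n → ℝ)) →ₗ[ℝ] ℝ) (c : ℝ),
      ∀ z, h j z = L z + c)
    (P : (Fin n → ℕ) → ℝ)
    (hP : ∀ χ : Fin n → ℕ,
      IsLeast {v : ℝ | ∃ x : Fin d → ℝ,
        (∀ i, g i (x, fun s => (χ s : ℝ)) ≤ 0) ∧
        (∀ j, h j (x, fun s => (χ s : ℝ)) = 0) ∧
        v = f (x, fun s => (χ s : ℝ))} (P χ)) :
    (∑ T ∈ Finset.univ.powersetCard k, P (fun s => if s ∈ T then 1 else 0)) /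
        (n.choose k : ℝ) ≤
      (∑ M : Fin k → Fin n,
          P (fun s => (Finset.univ.filter (fun i => M i = s)).card)) / (n : ℝ) ^ k := by
  have hsampling := sum_powersetCard_div_choose_le_sum_pi_div_pow (α := Fin n) (ι := Fin k)
    (P := P) (by simpa using hk) fun _ _ hw₀ hw₁ hχ =>
      le_sum_of_isLeast_convexProgram hf hg hh hP (fun M _ => hw₀ M) hw₁ hχ
  simpa only [Fintype.card_fin] using hsampling

/-- Replacement lemma for stochastic convex programs. Let `P(χ)` be the optimal value of
`min f(x, χ)` s.t. `gᵢ(x, χ) ≤ 0` and `hⱼ(x, χ) = 0`, where `f` and the `gᵢ` are jointly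
convex and the `hⱼ` are affine, and `χ` is the multiplicity vector of a multiset of
elements of `S = Fin n`. Then the expected optimum over a uniformly random `k`-subset
(sampling without replacement) is at most the expected optimum over `k` i.i.d. uniform
draws (sampling with replacement). -/
theorem stmt_11 (n d m l k : ℕ) (hn : 0 < n) (hk : k ≤ n)
    (f : ((Fin d → ℝ) × (Fin n → ℝ)) → ℝ)
    (g : Fin m → ((Fin d → ℝ) × (Fin n → ℝ)) → ℝ)
    (h : Fin l → ((Fin d → ℝ) × (Fin n → ℝ)) → ℝ)
    (hf : ConvexOn ℝ Set.univ f)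
    (hg : ∀ i, ConvexOn ℝ Set.univ (g i))
    (hh : ∀ j, ∃ (L : ((Fin d → ℝ) × (Fin n → ℝ)) →ₗ[ℝ] ℝ) (c : ℝ),
      ∀ z, h j z = L z + c)
    (P : (Fin n → ℕ) → ℝ)
    (hP : ∀ χ : Fin n → ℕ,
      IsLeast {v : ℝ | ∃ x : Fin d → ℝ,
        (∀ i, g i (x, fun s => (χ s : ℝ)) ≤ 0) ∧
        (∀ j, h j (x, fun s => (χ s : ℝ)) = 0) ∧
        v = f (x, fun s => (χ s : ℝ))} (P χ)) :
    (∑ T ∈ Finset.univ.powersetCard k, P (fun s => if s ∈ T then 1 else 0)) /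
        (n.choose k : ℝ) ≤
      (∑ M : Fin k → Fin n,
          P (fun s => (Finset.univ.filter (fun i => M i = s)).card)) / (n : ℝ) ^ k :=
  stmt_11_general n d m l k hk f g h hf hg hh P hP
end

section
/- Condition the distribution of k i.i.d. uniform samples (as an ordered tuple) from a set S of size n on the event A_T that an associated uniformly chosen k-set T ⊇ support(M) equals a fixed k-subset T. Then for each s ∈ T, the conditional expected multiplicity of s among the k samples equals 1. -/
open Finset

/-- The joint probability that the ordered tuple of `k` i.i.d. uniform samples from
`S = Fin n` equals `M` and that the associated die roll — a uniformly random `k`-subset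
among those containing the support of `M` — equals `T`. -/
noncomputable def jointProb (n k : ℕ) (M : Fin k → Fin n) (T : Finset (Fin n)) : ℝ :=
  if Finset.image M Finset.univ ⊆ T ∧ T.card = k then
    (1 / (n : ℝ) ^ k) *
      (1 / ((Finset.univ.powersetCard k).filter
        (fun U => Finset.image M Finset.univ ⊆ U)).card)
  else 0

/-!
Relabelling `S` by a permutation `σ` (sending `M` to `σ ∘ M` and `T` to `σ '' T`) preserves the
joint law, so `Pr[A_T]` is the same for every `k`-subset `T`; as the events `A_T` partition the
sample space, each has probability `1 / C(n, k)`. On `A_T` all samples lie in `T`, so the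
multiplicities of the elements of `T` add up to `k`. The transposition of two elements of `T`
fixes `T`, hence all these multiplicities have the same conditional expectation, which is
therefore `k / k = 1`.
-/

namespace Finset
variable {α : Type*} [DecidableEq α]

theorem exists_perm_image_eq {s t : Finset α} (h : #s = #t) :
    ∃ σ : Equiv.Perm α, s.image σ = t := by
  obtain ⟨σ, hσ⟩ := (Set.powersetCard.isPretransitive (α := α) (n := #t)).exists_smul_eq
    ⟨s, h⟩ ⟨t, rfl⟩
  refine ⟨σ, ?_⟩
  simpa [Subtype.ext_iff, smul_finset_def] using hσ

theorem image_swap_of_mem {s : Finset α} {a b : α} (ha : a ∈ s) (hb : b ∈ s) :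
    s.image (Equiv.swap a b) = s := by
  refine eq_of_subset_of_card_le (fun x hx => ?_)
    (card_image_of_injective _ (Equiv.injective _)).ge
  obtain ⟨y, hy, rfl⟩ := mem_image.mp hx
  rcases eq_or_ne y a with rfl | hya
  · simpa
  rcases eq_or_ne y b with rfl | hyb
  · simpa
  · rwa [Equiv.swap_apply_of_ne_of_ne hya hyb]

theorem card_filter_powersetCard_image_perm_subset [Fintype α] (σ : Equiv.Perm α)
    (s : Finset α) (k : ℕ) :
    #{U ∈ powersetCard k univ | s.image σ ⊆ U} = #{U ∈ powersetCard k univ | s ⊆ U} := by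
  refine card_nbij' (·.image σ.symm) (·.image σ) ?_ ?_ (fun U _ => by simp [image_image])
    (fun U _ => by simp [image_image]) <;> intro U hU <;>
    simp_all [card_image_of_injective _ (Equiv.injective _), subset_iff]
  exact fun x hx => ⟨σ x, hU.2 x hx, by simp⟩

end Finset

section jointProb

variable {n k : ℕ}

theorem jointProb_of_not_subset {M : Fin k → Fin n} {T : Finset (Fin n)}
    (h : ¬image M univ ⊆ T) : jointProb n k M T = 0 := by
  simp [jointProb, h]

theorem jointProb_comp_perm (σ : Equiv.Perm (Fin n)) (M : Fin k → Fin n) (T : Finset (Fin n)) :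
    jointProb n k (σ ∘ M) (T.image σ) = jointProb n k M T := by
  have himage : image (σ ∘ M) univ = (image M univ).image σ := image_image.symm
  simp only [jointProb, himage, card_image_of_injective _ σ.injective,
    image_subset_image_iff σ.injective, card_filter_powersetCard_image_perm_subset]

theorem sum_jointProb_powersetCard (hk : k ≤ n) (M : Fin k → Fin n) :
    ∑ T ∈ powersetCard k univ, jointProb n k M T = 1 / (n : ℝ) ^ k := by
  set F := {U ∈ powersetCard k (univ : Finset (Fin n)) | image M univ ⊆ U}
  have hF : (#F : ℝ) ≠ 0 := by
    obtain ⟨U, hMU, hU⟩ := Finset.exists_superset_card_eq (s := image M univ) (n := k)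
      (card_image_le.trans_eq (by simp)) (by simpa using hk)
    exact_mod_cast card_ne_zero_of_mem (s := F) (a := U) (by simp [F, hMU, hU])
  calc ∑ T ∈ powersetCard k univ, jointProb n k M T
      = ∑ T ∈ F, 1 / (n : ℝ) ^ k * (1 / #F) := by
        rw [sum_filter]
        refine sum_congr rfl fun T hT => ?_
        simp [jointProb, mem_powersetCard_univ.mp hT, F]
    _ = 1 / (n : ℝ) ^ k := by
        rw [sum_const, nsmul_eq_mul]
        field_simp

theorem sum_powersetCard_sum_jointProb (hk : k ≤ n) :
    ∑ T ∈ powersetCard k univ, ∑ M : Fin k → Fin n, jointProb n k M T = 1 := by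
  have hpow : (n : ℝ) ^ k ≠ 0 := by
    rcases Nat.eq_zero_or_pos n with rfl | hn
    · simp [Nat.le_zero.mp hk]
    · positivity
  rw [sum_comm, sum_congr rfl fun M _ => sum_jointProb_powersetCard hk M, sum_const, card_univ,
    Fintype.card_fun, Fintype.card_fin, Fintype.card_fin, nsmul_eq_mul]
  push_cast
  field_simp

theorem sum_jointProb_image_perm_mul (σ : Equiv.Perm (Fin n)) (T : Finset (Fin n))
    (g : (Fin k → Fin n) → ℝ) :
    ∑ M, jointProb n k M (T.image σ) * g M = ∑ M, jointProb n k M T * g (σ ∘ M) :=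
  (Fintype.sum_equiv ((Equiv.refl _).arrowCongr σ) _ _ fun M => by
    rw [← jointProb_comp_perm σ M T]; rfl).symm

theorem sum_jointProb_eq_of_card_eq {T T' : Finset (Fin n)} (h : #T = #T') :
    ∑ M, jointProb n k M T = ∑ M, jointProb n k M T' := by
  obtain ⟨σ, rfl⟩ := exists_perm_image_eq h
  simpa using (sum_jointProb_image_perm_mul σ T 1).symm

theorem sum_jointProb_eq_one_div_choose (hk : k ≤ n) {T : Finset (Fin n)} (hT : #T = k) :
    ∑ M, jointProb n k M T = 1 / n.choose k := by
  have htotal := sum_powersetCard_sum_jointProb hk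
  rw [sum_congr rfl fun T' hT' =>
      sum_jointProb_eq_of_card_eq ((mem_powersetCard_univ.mp hT').trans hT.symm),
    sum_const, card_powersetCard, card_univ, Fintype.card_fin, nsmul_eq_mul] at htotal
  exact eq_one_div_of_mul_eq_one_right htotal

theorem sum_jointProb_image_perm_mul_card (σ : Equiv.Perm (Fin n)) (T : Finset (Fin n))
    (s : Fin n) :
    ∑ M, jointProb n k M (T.image σ) * #{i | M i = σ s} =
      ∑ M, jointProb n k M T * #{i | M i = s} := by
  simp [sum_jointProb_image_perm_mul, σ.injective.eq_iff]

theorem sum_jointProb_mul_card_eq_of_mem {T : Finset (Fin n)} {s t : Fin n} (hs : s ∈ T)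
    (ht : t ∈ T) :
    ∑ M, jointProb n k M T * #{i | M i = s} = ∑ M, jointProb n k M T * #{i | M i = t} := by
  simpa [image_swap_of_mem hs ht] using (sum_jointProb_image_perm_mul_card (.swap s t) T s).symm

theorem sum_sum_jointProb_mul_card (T : Finset (Fin n)) :
    ∑ t ∈ T, ∑ M, jointProb n k M T * #{i | M i = t} = k * ∑ M, jointProb n k M T := by
  rw [sum_comm, mul_sum]
  refine sum_congr rfl fun M _ => ?_
  by_cases hMT : image M univ ⊆ T
  · rw [← mul_sum, ← Nat.cast_sum, ← card_eq_sum_card_fiberwise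
      fun i _ => hMT (mem_image_of_mem M (mem_univ i)), card_univ, Fintype.card_fin, mul_comm]
  · simp [jointProb_of_not_subset hMT]

end jointProb

theorem stmt_12_general (n k : ℕ) (hk : k ≤ n) (T : Finset (Fin n))
    (hT : T.card = k) :
    (∑ M : Fin k → Fin n, jointProb n k M T) = 1 / (n.choose k : ℝ) ∧
      ∀ s ∈ T,
        (∑ M : Fin k → Fin n,
            jointProb n k M T * ((Finset.univ.filter (fun i => M i = s)).card : ℝ)) =
          (∑ M : Fin k → Fin n, jointProb n k M T) * 1 := by
  refine ⟨sum_jointProb_eq_one_div_choose hk hT, fun s hs => ?_⟩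
  have hk0 : (k : ℝ) ≠ 0 := by exact_mod_cast hT ▸ card_ne_zero_of_mem hs
  apply mul_left_cancel₀ hk0
  rw [mul_one, ← sum_sum_jointProb_mul_card, sum_congr rfl fun t ht =>
    sum_jointProb_mul_card_eq_of_mem ht hs, sum_const, hT, nsmul_eq_mul]

/-- Conditioned on the event `A_T` that the uniformly chosen `k`-set containing the
support of the sample tuple `M` equals a fixed `k`-subset `T`, each `s ∈ T` has
conditional expected multiplicity exactly `1` among the `k` samples; moreover
`Pr[A_T] = 1/C(n,k)`. -/
theorem stmt_12 (n k : ℕ) (hn : 0 < n) (hk : k ≤ n) (T : Finset (Fin n))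
    (hT : T.card = k) :
    (∑ M : Fin k → Fin n, jointProb n k M T) = 1 / (n.choose k : ℝ) ∧
      ∀ s ∈ T,
        (∑ M : Fin k → Fin n,
            jointProb n k M T * ((Finset.univ.filter (fun i => M i = s)).card : ℝ)) =
          (∑ M : Fin k → Fin n, jointProb n k M T) * 1 :=
  stmt_12_general n k hk T hT
end

section
/- Let M(T) be the optimal value of the fractional transportation LP between a k-subset T of a metric space S of n points (each point in T with supply 1/k) and all of S (each point with demand 1/n). Then for any k ≤ n/2, M(T) = (n/k - 1)·M(S∖T); in particular M(T) ≥ M(S∖T). -/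
open Finset

/-- `transportVal n d T` is the optimal value of the fractional transportation LP between
the subset `T` of the `n`-point space (each point of `T` with supply `1/|T|`) and the whole
space (each point with demand `1/n`), with costs `d`. -/
noncomputable def transportVal (n : ℕ) (d : Fin n → Fin n → ℝ) (T : Finset (Fin n)) : ℝ :=
  sInf {c : ℝ | ∃ x : Fin n → Fin n → ℝ,
    (∀ i j, 0 ≤ x i j) ∧
    (∀ i ∈ T, ∑ j, x i j = 1 / (T.card : ℝ)) ∧
    (∀ j, ∑ i ∈ T, x i j = 1 / (n : ℝ)) ∧
    c = ∑ i ∈ T, ∑ j, d i j * x i j}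

/-!
Splitting off the mass that every point of `T` keeps for itself reduces `M(T)` to the
transportation problem from `T` (supplies `1/k - 1/n`) to `S ∖ T` (demands `1/n`). That no
optimum is lost rests on a pivoting step: the flow entering and leaving a point `p ∈ T` can be
rerouted into direct shipments without raising the cost (triangle inequality), after which `p`
serves its own demand; pivoting at every point of `T` in turn yields a plan of the split form.
The same reduction turns `M(S ∖ T)` into the transposed problem with supplies `1/(n-k) - 1/n`
and demands `1/n`, i.e. the first problem scaled by `k/(n-k)`.
-/

open scoped Pointwise

section Transport

variable {ι : Type*} {d : ι → ι → ℝ} {A B : Finset ι} {α β : ℝ} {x : ι → ι → ℝ}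

structure IsTransportPlan (A B : Finset ι) (α β : ℝ) (x : ι → ι → ℝ) :
    Prop where
  nonneg : ∀ i j, 0 ≤ x i j
  sum_row : ∀ i ∈ A, ∑ j ∈ B, x i j = α
  sum_col : ∀ j ∈ B, ∑ i ∈ A, x i j = β

def transportCost (d : ι → ι → ℝ) (A B : Finset ι) (x : ι → ι → ℝ) : ℝ :=
  ∑ i ∈ A, ∑ j ∈ B, d i j * x i j

def transportCosts (d : ι → ι → ℝ) (A B : Finset ι) (α β : ℝ) : Set ℝ :=
  transportCost d A B '' {x | IsTransportPlan A B α β x}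

lemma transportCost_nonneg (hd : ∀ i j, 0 ≤ d i j) (hx : ∀ i j, 0 ≤ x i j) :
    0 ≤ transportCost d A B x :=
  sum_nonneg fun i _ => sum_nonneg fun j _ => mul_nonneg (hd i j) (hx i j)

lemma IsTransportPlan.apply_le (hx : IsTransportPlan A B α β x) {i j : ι} (hi : i ∈ A)
    (hj : j ∈ B) : x i j ≤ β :=
  hx.sum_col j hj ▸ single_le_sum (fun i _ => hx.nonneg i j) hi

lemma IsTransportPlan.swap (hx : IsTransportPlan A B α β x) :
    IsTransportPlan B A β α (Function.swap x) :=
  ⟨fun i j => hx.nonneg j i, hx.sum_col, hx.sum_row⟩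

lemma transportCost_swap (hd : ∀ i j, d i j = d j i) :
    transportCost d B A (Function.swap x) = transportCost d A B x := by
  rw [transportCost, transportCost, sum_comm]
  simp only [Function.swap, hd]

lemma transportCosts_subset_swap (hd : ∀ i j, d i j = d j i) :
    transportCosts d A B α β ⊆ transportCosts d B A β α := by
  rintro _ ⟨x, hx, rfl⟩
  exact ⟨Function.swap x, hx.swap, transportCost_swap hd⟩

lemma transportCosts_comm (hd : ∀ i j, d i j = d j i) :
    transportCosts d A B α β = transportCosts d B A β α :=
  (transportCosts_subset_swap hd).antisymm (transportCosts_subset_swap hd)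

lemma IsTransportPlan.smul {c : ℝ} (hc : 0 ≤ c) (hx : IsTransportPlan A B α β x) :
    IsTransportPlan A B (c * α) (c * β) (c • x) where
  nonneg i j := mul_nonneg hc (hx.nonneg i j)
  sum_row i hi := by simp only [Pi.smul_apply, smul_eq_mul, ← mul_sum, hx.sum_row i hi]
  sum_col j hj := by simp only [Pi.smul_apply, smul_eq_mul, ← mul_sum, hx.sum_col j hj]

lemma transportCost_smul (c : ℝ) :
    transportCost d A B (c • x) = c * transportCost d A B x := by
  simp only [transportCost, Pi.smul_apply, smul_eq_mul, mul_sum]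
  exact sum_congr rfl fun i _ => sum_congr rfl fun j _ => by ring

lemma smul_transportCosts_subset {c : ℝ} (hc : 0 ≤ c) :
    c • transportCosts d A B α β ⊆ transportCosts d A B (c * α) (c * β) := by
  rintro _ ⟨_, ⟨x, hx, rfl⟩, rfl⟩
  exact ⟨c • x, hx.smul hc, transportCost_smul c⟩

lemma transportCosts_mul {c : ℝ} (hc : 0 < c) :
    transportCosts d A B (c * α) (c * β) = c • transportCosts d A B α β := by
  refine Set.Subset.antisymm ((Set.subset_smul_set_iff₀ hc.ne').2 ?_)
    (smul_transportCosts_subset hc.le)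
  simpa only [inv_mul_cancel_left₀ hc.ne'] using
    smul_transportCosts_subset (c := c⁻¹) (α := c * α) (β := c * β) (d := d) (A := A) (B := B)
      (inv_nonneg.2 hc.le)

lemma sum_sum_mul_mul_eq_of_sum_eq_zero (d : ι → ι → ℝ) {u w : ι → ℝ}
    (hu : ∑ i ∈ A, u i = 0) (hw : ∑ j ∈ B, w j = 0) (p : ι) :
    ∑ i ∈ A, ∑ j ∈ B, d i j * (u i * w j) =
      ∑ i ∈ A, ∑ j ∈ B, u i * w j * (d i j - d i p - d p j + d p p) := by
  have h₁ : ∑ i ∈ A, ∑ j ∈ B, u i * w j * d i p = 0 := by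
    simp [mul_right_comm _ (w _), ← mul_sum, hw]
  have h₂ : ∑ i ∈ A, ∑ j ∈ B, u i * w j * d p j = 0 := by
    simp [mul_assoc, ← mul_sum, ← sum_mul, hu]
  have h₃ : ∑ i ∈ A, ∑ j ∈ B, u i * w j * d p p = 0 := by
    simp [← sum_mul, ← mul_sum, hu]
  simp only [mul_add, mul_sub, sum_add_distrib, sum_sub_distrib, h₁, h₂, h₃]
  simp only [sub_zero, add_zero, mul_comm (d _ _)]

lemma IsTransportPlan.add_mul_of_sum_eq_zero {u w : ι → ℝ}
    (hx : IsTransportPlan A B α β x) (hu : ∑ i ∈ A, u i = 0) (hw : ∑ j ∈ B, w j = 0)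
    (hnonneg : ∀ i j, 0 ≤ x i j + u i * w j) :
    IsTransportPlan A B α β (fun i j => x i j + u i * w j) where
  nonneg := hnonneg
  sum_row i hi := by rw [sum_add_distrib, ← mul_sum, hw, mul_zero, add_zero, hx.sum_row i hi]
  sum_col j hj := by rw [sum_add_distrib, ← sum_mul, hu, zero_mul, add_zero, hx.sum_col j hj]

/-- The update `u ⊗ w` moves mass from the two-leg routes `i → p → j` onto the direct routes
`i → j`. -/
lemma transportCost_add_mul_le {u w : ι → ℝ} {p : ι} (hdp : d p p = 0)
    (hd : ∀ i j, d i j ≤ d i p + d p j) (hu : ∑ i ∈ A, u i = 0) (hw : ∑ j ∈ B, w j = 0)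
    (hu₀ : ∀ i, i ≠ p → 0 ≤ u i) (hw₀ : ∀ j, j ≠ p → 0 ≤ w j) :
    transportCost d A B (fun i j => x i j + u i * w j) ≤ transportCost d A B x := by
  have key : ∑ i ∈ A, ∑ j ∈ B, d i j * (u i * w j) ≤ 0 := by
    rw [sum_sum_mul_mul_eq_of_sum_eq_zero d hu hw p]
    refine sum_nonpos fun i _ => sum_nonpos fun j _ => ?_
    rcases eq_or_ne i p with rfl | hi
    · simp
    rcases eq_or_ne j p with rfl | hj
    · simp
    exact mul_nonpos_of_nonneg_of_nonpos (mul_nonneg (hu₀ i hi) (hw₀ j hj))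
      (by linarith [hd i j])
  simpa only [transportCost, mul_add, sum_add_distrib, add_le_iff_nonpos_right] using key

end Transport

section Reduction

variable {ι : Type*} [DecidableEq ι] {d : ι → ι → ℝ} {U : Finset ι} {α β : ℝ}
  {x : ι → ι → ℝ} {p : ι}

lemma IsTransportPlan.apply_eq_zero_of_apply_self {B : Finset ι}
    (hx : IsTransportPlan U B α β x) {q : ι} (hp : p ∈ U) (hq : q ∈ U) (hqB : q ∈ B)
    (hpq : p ≠ q) (hqq : x q q = β) : x p q = 0 := by
  have h := add_sum_erase U (fun i => x i q) hq
  rw [hx.sum_col q hqB, hqq, add_eq_left] at h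
  exact (sum_eq_zero_iff_of_nonneg fun i _ => hx.nonneg i q).1 h p (mem_erase.2 ⟨hpq, hp⟩)

lemma IsTransportPlan.sum_sub_ite_col {B : Finset ι} (hx : IsTransportPlan U B α β x)
    (hpU : p ∈ U) (hpB : p ∈ B) : ∑ i ∈ U, (x i p - if i = p then β else 0) = 0 := by
  rw [sum_sub_distrib, sum_ite_eq', if_pos hpU, hx.sum_col p hpB, sub_self]

lemma IsTransportPlan.sum_sub_ite_row {B : Finset ι} (hx : IsTransportPlan U B α β x)
    (hpU : p ∈ U) (hpB : p ∈ B) : ∑ j ∈ B, (x p j - if j = p then α else 0) = 0 := by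
  rw [sum_sub_distrib, sum_ite_eq', if_pos hpB, hx.sum_row p hpU, sub_self]

/-- Whatever `p` receives from other sources and sends to other targets is rerouted into direct
shipments, after which `p` meets its own demand `β`. -/
noncomputable def pivot (α β : ℝ) (x : ι → ι → ℝ) (p : ι) : ι → ι → ℝ :=
  fun i j => x i j +
    (x i p - if i = p then β else 0) / (α - x p p) * (x p j - if j = p then α else 0)

lemma pivot_apply_self (h : x p p ≠ α) : pivot α β x p p p = β := by
  have : α - x p p ≠ 0 := sub_ne_zero.2 h.symm
  simp only [pivot, if_true]
  field_simp
  ring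

variable [Fintype ι]

lemma pivot_nonneg (hx : IsTransportPlan U univ α β x) (hp : p ∈ U) (hβα : β < α) (i j : ι) :
    0 ≤ pivot α β x p i j := by
  have hpp := hx.apply_le hp (mem_univ p)
  have hB : 0 < α - x p p := by linarith
  by_cases hi : i = p <;> by_cases hj : j = p
  · rw [hi, hj, pivot_apply_self (by linarith)]
    linarith [hx.nonneg p p]
  · have : pivot α β x p p j = x p j * ((α - β) / (α - x p p)) := by
      simp only [pivot, if_true, if_neg hj]
      field_simp
      ring
    rw [hi, this]
    exact mul_nonneg (hx.nonneg p j) (div_nonneg (by linarith) hB.le)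
  · have : pivot α β x p i p = 0 := by
      simp only [pivot, if_true, if_neg hi]
      field_simp
      ring
    rw [hj, this]
  · simp only [pivot, if_neg hi, if_neg hj, sub_zero]
    have := hx.nonneg i j
    have := hx.nonneg i p
    have := hx.nonneg p j
    positivity

lemma isTransportPlan_pivot (hx : IsTransportPlan U univ α β x) (hp : p ∈ U) (hβα : β < α) :
    IsTransportPlan U univ α β (pivot α β x p) :=
  hx.add_mul_of_sum_eq_zero (by rw [← sum_div, hx.sum_sub_ite_col hp (mem_univ p), zero_div])
    (hx.sum_sub_ite_row hp (mem_univ p)) (pivot_nonneg hx hp hβα)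

lemma transportCost_pivot_le (hdp : d p p = 0) (hd : ∀ i j, d i j ≤ d i p + d p j)
    (hx : IsTransportPlan U univ α β x) (hp : p ∈ U) (hβα : β < α) :
    transportCost d U univ (pivot α β x p) ≤ transportCost d U univ x := by
  have hB : 0 < α - x p p := by linarith [hx.apply_le hp (mem_univ p)]
  refine transportCost_add_mul_le hdp hd
    (by rw [← sum_div, hx.sum_sub_ite_col hp (mem_univ p), zero_div])
    (hx.sum_sub_ite_row hp (mem_univ p)) (fun i hi => ?_) (fun j hj => ?_)
  · rw [if_neg hi, sub_zero]
    exact div_nonneg (hx.nonneg i p) hB.le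
  · rw [if_neg hj, sub_zero]
    exact hx.nonneg p j

lemma pivot_apply_self_of_apply_self (hx : IsTransportPlan U univ α β x) (hp : p ∈ U)
    (hβα : β < α) {q : ι} (hq : q ∈ U) (hqq : x q q = β) : pivot α β x p q q = β := by
  rcases eq_or_ne q p with rfl | hqp
  · exact pivot_apply_self (hqq.trans_ne hβα.ne)
  have hpq : x p q = 0 := hx.apply_eq_zero_of_apply_self hp hq (mem_univ q) hqp.symm hqq
  simp [pivot, hqp, hpq, hqq]

lemma exists_isTransportPlan_apply_self_eq (hdp : ∀ i, d i i = 0)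
    (hd : ∀ i j l, d i l ≤ d i j + d j l) (hβα : β < α) (hx : IsTransportPlan U univ α β x) :
    ∃ y, IsTransportPlan U univ α β y ∧ transportCost d U univ y ≤ transportCost d U univ x ∧
      ∀ q ∈ U, y q q = β := by
  suffices h : ∀ D ⊆ U, ∃ y, IsTransportPlan U univ α β y ∧
      transportCost d U univ y ≤ transportCost d U univ x ∧ ∀ q ∈ D, y q q = β from
    h U subset_rfl
  intro D
  induction D using Finset.induction_on with
  | empty => exact fun _ => ⟨x, hx, le_rfl, by simp⟩
  | insert p D _ ih =>
    intro hD
    obtain ⟨y, hy, hcost, hdiag⟩ := ih ((subset_insert p D).trans hD)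
    have hp : p ∈ U := hD (mem_insert_self p D)
    refine ⟨pivot α β y p, isTransportPlan_pivot hy hp hβα,
      (transportCost_pivot_le (hdp p) (fun i j => hd i p j) hy hp hβα).trans hcost, ?_⟩
    rw [forall_mem_insert]
    exact ⟨pivot_apply_self ((hy.apply_le hp (mem_univ p)).trans_lt hβα).ne,
      fun q hq => pivot_apply_self_of_apply_self hy hp hβα (hD (mem_insert_of_mem hq))
        (hdiag q hq)⟩

lemma IsTransportPlan.sum_mul_eq_of_apply_self (hx : IsTransportPlan U univ α β x)
    (hdiag : ∀ q ∈ U, x q q = β) {i : ι} (hi : i ∈ U) (g : ι → ℝ) :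
    ∑ j ∈ U, g j * x i j = g i * β := by
  rw [sum_eq_single_of_mem i hi fun j hj hji => by
    rw [hx.apply_eq_zero_of_apply_self hi hj (mem_univ j) hji.symm (hdiag j hj), mul_zero],
    hdiag i hi]

lemma IsTransportPlan.compl_of_apply_self (hx : IsTransportPlan U univ α β x)
    (hdiag : ∀ q ∈ U, x q q = β) : IsTransportPlan U Uᶜ (α - β) β x where
  nonneg := hx.nonneg
  sum_row i hi := by
    have h := sum_add_sum_compl U (x i)
    have hU := hx.sum_mul_eq_of_apply_self hdiag hi fun _ => 1
    simp only [one_mul] at hU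
    rw [hU, hx.sum_row i hi] at h
    linarith
  sum_col j _ := hx.sum_col j (mem_univ j)

lemma transportCost_compl_of_apply_self (hdp : ∀ i, d i i = 0)
    (hx : IsTransportPlan U univ α β x) (hdiag : ∀ q ∈ U, x q q = β) :
    transportCost d U Uᶜ x = transportCost d U univ x := by
  refine sum_congr rfl fun i hi => ?_
  rw [← sum_add_sum_compl U, hx.sum_mul_eq_of_apply_self hdiag hi, hdp, zero_mul, zero_add]

noncomputable def withDiagonal (U : Finset ι) (β : ℝ) (z : ι → ι → ℝ) : ι → ι → ℝ :=
  fun i j => if j ∈ U then (if i = j then β else 0) else z i j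

lemma sum_mul_withDiagonal {i : ι} (hi : i ∈ U) (g : ι → ℝ) (z : ι → ι → ℝ) :
    ∑ j, g j * withDiagonal U β z i j = g i * β + ∑ j ∈ Uᶜ, g j * z i j := by
  rw [← sum_add_sum_compl U]
  congr 1
  · rw [sum_congr rfl fun j hj => by rw [withDiagonal, if_pos hj, mul_ite, mul_zero]]
    simp [hi]
  · exact sum_congr rfl fun j hj => by rw [withDiagonal, if_neg (mem_compl.1 hj)]

lemma isTransportPlan_withDiagonal {z : ι → ι → ℝ} (hz : IsTransportPlan U Uᶜ (α - β) β z)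
    (hβ : 0 ≤ β) : IsTransportPlan U univ α β (withDiagonal U β z) where
  nonneg i j := by
    unfold withDiagonal
    split_ifs
    exacts [hβ, le_rfl, hz.nonneg i j]
  sum_row i hi := by
    simpa [hz.sum_row i hi] using sum_mul_withDiagonal (β := β) hi (fun _ => 1) z
  sum_col j _ := by
    by_cases hj : j ∈ U
    · simp [withDiagonal, hj]
    · simp only [withDiagonal, if_neg hj]
      exact hz.sum_col j (mem_compl.2 hj)

lemma transportCost_withDiagonal (hdp : ∀ i, d i i = 0) (z : ι → ι → ℝ) :
    transportCost d U univ (withDiagonal U β z) = transportCost d U Uᶜ z :=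
  sum_congr rfl fun i hi => by rw [sum_mul_withDiagonal hi, hdp, zero_mul, zero_add]

theorem sInf_transportCosts_univ_eq_compl (hdp : ∀ i, d i i = 0)
    (hd : ∀ i j l, d i l ≤ d i j + d j l) (hβ : 0 ≤ β) (hβα : β < α) :
    sInf (transportCosts d U univ α β) = sInf (transportCosts d U Uᶜ (α - β) β) := by
  apply csInf_eq_csInf_of_forall_exists_le
  · rintro _ ⟨x, hx, rfl⟩
    obtain ⟨y, hy, hcost, hdiag⟩ := exists_isTransportPlan_apply_self_eq hdp hd hβα hx
    exact ⟨_, ⟨y, hy.compl_of_apply_self hdiag, rfl⟩,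
      (transportCost_compl_of_apply_self hdp hy hdiag).trans_le hcost⟩
  · rintro _ ⟨z, hz, rfl⟩
    exact ⟨_, ⟨withDiagonal U β z, isTransportPlan_withDiagonal hz hβ, rfl⟩,
      (transportCost_withDiagonal hdp z).le⟩

end Reduction

section FinitePoints

variable {n : ℕ} {d : Fin n → Fin n → ℝ} {U : Finset (Fin n)}

lemma transportVal_eq_sInf_transportCosts :
    transportVal n d U = sInf (transportCosts d U univ (1 / #U) (1 / n)) := by
  unfold transportVal
  congr 1
  ext c
  constructor
  · rintro ⟨x, hx₀, hrow, hcol, rfl⟩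
    exact ⟨x, ⟨hx₀, hrow, fun j _ => hcol j⟩, rfl⟩
  · rintro ⟨x, hx, rfl⟩
    exact ⟨x, hx.nonneg, hx.sum_row, fun j => hx.sum_col j (mem_univ j), rfl⟩

lemma transportVal_nonneg (hd : ∀ i j, 0 ≤ d i j) : 0 ≤ transportVal n d U := by
  rw [transportVal_eq_sInf_transportCosts]
  exact Real.sInf_nonneg (by rintro _ ⟨x, hx, rfl⟩; exact transportCost_nonneg hd hx.nonneg)

lemma transportVal_eq_sInf_transportCosts_compl (hdp : ∀ i, d i i = 0)
    (hd : ∀ i j l, d i l ≤ d i j + d j l) (hU : 0 < #U) (hUn : #U < n) :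
    transportVal n d U = sInf (transportCosts d U Uᶜ (1 / #U - 1 / n) (1 / n)) := by
  rw [transportVal_eq_sInf_transportCosts,
    sInf_transportCosts_univ_eq_compl hdp hd (by positivity)]
  exact one_div_lt_one_div_of_lt (by exact_mod_cast hU) (by exact_mod_cast hUn)

end FinitePoints

/-- For a `k`-subset `T` of an `n`-point metric space with `k ≤ n/2`,
`M(T) = (n/k - 1)·M(S∖T)`; in particular `M(T) ≥ M(S∖T)`. -/
theorem stmt_14 (n k : ℕ) (d : Fin n → Fin n → ℝ)
    (d_nonneg : ∀ i j, 0 ≤ d i j) (d_self : ∀ i, d i i = 0)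
    (d_symm : ∀ i j, d i j = d j i)
    (d_triangle : ∀ i j l, d i l ≤ d i j + d j l)
    (T : Finset (Fin n)) (hT : T.card = k) (hk : 0 < k) (hkn : 2 * k ≤ n) :
    transportVal n d T = ((n : ℝ) / k - 1) * transportVal n d (Finset.univ \ T) ∧
      transportVal n d (Finset.univ \ T) ≤ transportVal n d T := by
  have hk₀ : (0 : ℝ) < k := by exact_mod_cast hk
  have hkn' : (2 * k : ℝ) ≤ n := by exact_mod_cast hkn
  have hcard : #Tᶜ = n - k := by rw [card_compl, Fintype.card_fin, hT]
  set c : ℝ := n / k - 1 with hc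
  have hc₁ : 1 ≤ c := by rw [hc, le_sub_iff_add_le, le_div_iff₀ hk₀]; linarith
  have hscale : transportCosts d T Tᶜ (1 / #T - 1 / n) (1 / n) =
      c • transportCosts d T Tᶜ (1 / n) (1 / #Tᶜ - 1 / n) := by
    have : (n : ℝ) ≠ 0 := by linarith
    have : (n : ℝ) - k ≠ 0 := by linarith
    rw [← transportCosts_mul (by linarith), hcard, Nat.cast_sub (by omega), hT, hc]
    congr 1 <;> field_simp
    ring
  have hval : transportVal n d T = c * transportVal n d Tᶜ := by
    rw [transportVal_eq_sInf_transportCosts_compl d_self d_triangle (by omega) (by omega),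
      transportVal_eq_sInf_transportCosts_compl d_self d_triangle (U := Tᶜ) (by omega) (by omega),
      compl_compl, transportCosts_comm d_symm (A := Tᶜ), hscale,
      Real.sInf_smul_of_nonneg (by linarith), smul_eq_mul]
  rw [← compl_eq_univ_sdiff]
  exact ⟨hval, by nlinarith [transportVal_nonneg d_nonneg (U := Tᶜ)]⟩
end

section
/- For the max-weight perfect matching problem under i.i.d. arrivals, the fair-bias algorithm that at each step with k free servers matches according to an optimal solution of the max-weight transportation LP M(S_k) achieves expected weight at least (1/2)·E[OPT], using: (i) E_{S_k~U_k}[M(S_k)] ≥ (k/n)·M(S), (ii) E[OPT] ≤ n·M(S), and (iii) ∑_{k=1}^n k/n² ≥ 1/2. -/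
open Finset

/-- `maxTransport n m w p T`: the optimal value of the max-weight transportation LP
between the set `T` of free servers (each with supply `1/|T|`) and the request types
(type `j` with demand `p j`), with weights `w`. -/
noncomputable def maxTransport (n m : ℕ) (w : Fin n → Fin m → ℝ) (p : Fin m → ℝ)
    (T : Finset (Fin n)) : ℝ :=
  sSup {c : ℝ | ∃ x : Fin n → Fin m → ℝ,
    (∀ i j, 0 ≤ x i j) ∧
    (∀ i ∈ T, ∑ j, x i j = 1 / (T.card : ℝ)) ∧
    (∀ j, ∑ i ∈ T, x i j = p j) ∧
    c = ∑ i ∈ T, ∑ j, w i j * x i j}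

/-- The weight of a max-weight perfect matching of the `n` realized requests `req`
to the `n` servers. -/
noncomputable def maxPerfMatch (n m : ℕ) (w : Fin n → Fin m → ℝ)
    (req : Fin n → Fin m) : ℝ :=
  sSup {c : ℝ | ∃ π : Fin n ≃ Fin n, c = ∑ a : Fin n, w (π a) (req a)}

/-!
Averaging the optimal matchings of the realized requests over the request distribution gives a
fractional plan on all `n` servers of value `E[OPT] / n`, so `E[OPT] ≤ n · M(S)`. In turn,
every plan `x` on `S` can be squeezed onto a `k`-subset `T` by spreading the mass of the servers
outside `T` evenly over `T`; with nonnegative weights this only increases the value on `T`, and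
since every server lies in a `k / n` fraction of the `k`-subsets,
`E_{S_k}[M(S_k)] ≥ (k / n) · M(S)`.
Summing over `k` and using `∑_{k=1}^n k / n ≥ n / 2` gives the bound.
-/

theorem Finset.sum_powersetCard_sum {α M : Type*} [DecidableEq α] [AddCommMonoid M]
    (s : Finset α) {k : ℕ} (hk : 1 ≤ k) (f : α → M) :
    ∑ T ∈ s.powersetCard k, ∑ i ∈ T, f i = (#s - 1).choose (k - 1) • ∑ i ∈ s, f i := by
  have hcount : ∀ i ∈ s, #{T ∈ s.powersetCard k | i ∈ T} = (#s - 1).choose (k - 1) := by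
    intro i hi
    simpa using card_filter_powersetCard_subset {i} s k (singleton_subset_iff.mpr hi) hk
  calc ∑ T ∈ s.powersetCard k, ∑ i ∈ T, f i
      = ∑ T ∈ s.powersetCard k, ∑ i ∈ s, if i ∈ T then f i else 0 := by
        refine sum_congr rfl fun T hT => ?_
        rw [sum_ite_mem, inter_eq_right.mpr (mem_powersetCard.mp hT).1]
    _ = ∑ i ∈ s, #{T ∈ s.powersetCard k | i ∈ T} • f i := by
        rw [sum_comm]
        refine sum_congr rfl fun i _ => ?_
        rw [← sum_filter, sum_const]
    _ = (#s - 1).choose (k - 1) • ∑ i ∈ s, f i := by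
        rw [smul_sum]
        exact sum_congr rfl fun i hi => by rw [hcount i hi]

theorem Fintype.sum_prod_mul_apply {ι α : Type*} [Fintype ι] [DecidableEq ι] [Fintype α]
    {p : α → ℝ} (hp : ∑ j, p j = 1) (a : ι) (φ : α → ℝ) :
    ∑ x : ι → α, (∏ b, p (x b)) * φ (x a) = ∑ j, p j * φ j := by
  have hfactor : ∀ x : ι → α,
      (∏ b, p (x b)) * φ (x a) = ∏ b, p (x b) * if b = a then φ (x b) else 1 := fun x => by
    rw [prod_mul_distrib, Fintype.prod_ite_eq' a fun b => φ (x b)]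
  have hsum : ∀ b, ∑ j, p j * (if b = a then φ j else 1) =
      if b = a then ∑ j, p j * φ j else 1 := fun b => by
    split_ifs <;> simp [hp]
  simp_rw [hfactor, ← Fintype.prod_sum (fun b j => p j * if b = a then φ j else 1), hsum,
    Fintype.prod_ite_eq']

lemma choose_pred_div_choose {n k : ℕ} (hk : 1 ≤ k) (hkn : k ≤ n) :
    ((n - 1).choose (k - 1) : ℝ) / n.choose k = k / n := by
  obtain ⟨k, rfl⟩ := Nat.exists_eq_add_of_le' hk
  obtain ⟨n, rfl⟩ := Nat.exists_eq_add_of_le' (hk.trans hkn)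
  have h := Nat.add_one_mul_choose_eq n k
  have hc : (0 : ℝ) < (n + 1).choose (k + 1) := by exact_mod_cast Nat.choose_pos hkn
  rw [div_eq_div_iff hc.ne' (by positivity)]
  simp only [Nat.add_sub_cancel]
  exact_mod_cast (by linarith [h] : n.choose k * (n + 1) = (k + 1) * (n + 1).choose (k + 1))

lemma sum_Icc_natCast_mul_two (n : ℕ) : (∑ k ∈ Icc 1 n, (k : ℝ)) * 2 = n * (n + 1) := by
  induction n with
  | zero => simp
  | succ n ih =>
    rw [sum_Icc_succ_top (by omega), add_mul, ih]
    push_cast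
    ring

lemma half_mul_le_sum_Icc_div (n : ℕ) : 1 / 2 * (n : ℝ) ≤ ∑ k ∈ Icc 1 n, (k : ℝ) / n := by
  rcases n.eq_zero_or_pos with rfl | hn
  · simp
  rw [← sum_div, le_div_iff₀ (by positivity)]
  nlinarith [sum_Icc_natCast_mul_two n]

section Transport

variable {n m : ℕ}

structure IsTransportPlan_s19 (p : Fin m → ℝ) (T : Finset (Fin n)) (x : Fin n → Fin m → ℝ) :
    Prop where
  nonneg : ∀ i j, 0 ≤ x i j
  row_sum : ∀ i ∈ T, ∑ j, x i j = 1 / (#T : ℝ)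
  col_sum : ∀ j, ∑ i ∈ T, x i j = p j

lemma IsTransportPlan_s19.le_one {p : Fin m → ℝ} {T : Finset (Fin n)} {x : Fin n → Fin m → ℝ}
    (hx : IsTransportPlan_s19 p T x) {i : Fin n} (hi : i ∈ T) (j : Fin m) : x i j ≤ 1 :=
  calc x i j ≤ ∑ j', x i j' := single_le_sum (fun j' _ => hx.nonneg i j') (mem_univ j)
    _ = 1 / (#T : ℝ) := hx.row_sum i hi
    _ ≤ 1 := div_le_one_of_le₀ (by exact_mod_cast card_pos.mpr ⟨i, hi⟩) (Nat.cast_nonneg _)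

lemma bddAbove_transportValues (w : Fin n → Fin m → ℝ) (p : Fin m → ℝ) (T : Finset (Fin n)) :
    BddAbove {c : ℝ | ∃ x : Fin n → Fin m → ℝ,
      (∀ i j, 0 ≤ x i j) ∧
      (∀ i ∈ T, ∑ j, x i j = 1 / (T.card : ℝ)) ∧
      (∀ j, ∑ i ∈ T, x i j = p j) ∧
      c = ∑ i ∈ T, ∑ j, w i j * x i j} := by
  refine ⟨∑ i, ∑ j, |w i j|, ?_⟩
  rintro c ⟨x, hx0, hrow, hcol, rfl⟩
  have hx : IsTransportPlan_s19 p T x := ⟨hx0, hrow, hcol⟩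
  calc ∑ i ∈ T, ∑ j, w i j * x i j ≤ ∑ i ∈ T, ∑ j, |w i j| := by
        refine sum_le_sum fun i hi => sum_le_sum fun j _ => ?_
        calc w i j * x i j ≤ |w i j| * x i j :=
              mul_le_mul_of_nonneg_right (le_abs_self _) (hx0 i j)
          _ ≤ |w i j| := mul_le_of_le_one_right (abs_nonneg _) (hx.le_one hi j)
    _ ≤ ∑ i, ∑ j, |w i j| :=
        sum_le_sum_of_subset_of_nonneg (subset_univ T)
          fun i _ _ => sum_nonneg fun j _ => abs_nonneg _

lemma le_maxTransport {w : Fin n → Fin m → ℝ} {p : Fin m → ℝ} {T : Finset (Fin n)}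
    {x : Fin n → Fin m → ℝ} (hx : IsTransportPlan_s19 p T x) :
    ∑ i ∈ T, ∑ j, w i j * x i j ≤ maxTransport n m w p T :=
  le_csSup (bddAbove_transportValues w p T) ⟨x, hx.nonneg, hx.row_sum, hx.col_sum, rfl⟩

lemma maxTransport_le {w : Fin n → Fin m → ℝ} {p : Fin m → ℝ} {T : Finset (Fin n)} {b : ℝ}
    (hT : ∃ x, IsTransportPlan_s19 p T x)
    (h : ∀ x, IsTransportPlan_s19 p T x → ∑ i ∈ T, ∑ j, w i j * x i j ≤ b) :
    maxTransport n m w p T ≤ b := by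
  obtain ⟨x, hx⟩ := hT
  refine csSup_le ⟨_, x, hx.nonneg, hx.row_sum, hx.col_sum, rfl⟩ ?_
  rintro c ⟨y, hy0, hrow, hcol, rfl⟩
  exact h y ⟨hy0, hrow, hcol⟩

lemma isTransportPlan_uniform (hn : 0 < n) {p : Fin m → ℝ} (hp : ∀ j, 0 ≤ p j)
    (hpsum : ∑ j, p j = 1) : IsTransportPlan_s19 p univ (fun (_ : Fin n) j => p j / n) where
  nonneg _ j := div_nonneg (hp j) (Nat.cast_nonneg n)
  row_sum _ _ := by rw [← sum_div, hpsum, card_univ, Fintype.card_fin]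
  col_sum j := by
    rw [sum_const, card_univ, Fintype.card_fin, nsmul_eq_mul]
    field_simp

lemma maxTransport_univ_nonneg (hn : 0 < n) {w : Fin n → Fin m → ℝ} (hw : ∀ i j, 0 ≤ w i j)
    {p : Fin m → ℝ} (hp : ∀ j, 0 ≤ p j) (hpsum : ∑ j, p j = 1) :
    0 ≤ maxTransport n m w p univ :=
  (sum_nonneg fun i _ => sum_nonneg fun j _ => mul_nonneg (hw i j)
    ((isTransportPlan_uniform hn hp hpsum).nonneg i j)).trans
    (le_maxTransport (isTransportPlan_uniform hn hp hpsum))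

lemma IsTransportPlan_s19.spread {p : Fin m → ℝ} {x : Fin n → Fin m → ℝ}
    (hx : IsTransportPlan_s19 p univ x) {T : Finset (Fin n)} (hT : T.Nonempty) :
    IsTransportPlan_s19 p T (fun i j => x i j + (∑ i' ∈ Tᶜ, x i' j) / #T) where
  nonneg i j := add_nonneg (hx.nonneg i j) (div_nonneg (sum_nonneg fun i' _ => hx.nonneg i' j)
    (Nat.cast_nonneg _))
  row_sum i _ := by
    have hrow : ∀ i', ∑ j, x i' j = 1 / n := by simpa using hx.row_sum
    have hTn : (#T : ℝ) ≤ n := by exact_mod_cast card_le_univ T |>.trans_eq (Fintype.card_fin n)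
    have hT0 : (0 : ℝ) < #T := by exact_mod_cast hT.card_pos
    have hn0 : (0 : ℝ) < n := hT0.trans_le hTn
    rw [sum_add_distrib, ← sum_div, sum_comm, hrow, sum_congr rfl fun i' _ => hrow i', sum_const,
      card_compl, Fintype.card_fin, nsmul_eq_mul, Nat.cast_sub (by exact_mod_cast hTn)]
    field_simp
    ring
  col_sum j := by
    rw [sum_add_distrib, sum_const, nsmul_eq_mul,
      mul_div_cancel₀ _ (by exact_mod_cast hT.card_pos.ne'), sum_add_sum_compl, ← hx.col_sum j]

lemma sum_le_maxTransport_of_isTransportPlan_univ {w : Fin n → Fin m → ℝ} (hw : ∀ i j, 0 ≤ w i j)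
    {p : Fin m → ℝ} {x : Fin n → Fin m → ℝ} (hx : IsTransportPlan_s19 p univ x)
    {T : Finset (Fin n)} (hT : T.Nonempty) :
    ∑ i ∈ T, ∑ j, w i j * x i j ≤ maxTransport n m w p T :=
  (sum_le_sum fun i _ => sum_le_sum fun j _ => mul_le_mul_of_nonneg_left
    (le_add_of_nonneg_right (div_nonneg (sum_nonneg fun i' _ => hx.nonneg i' j)
      (Nat.cast_nonneg _))) (hw i j)).trans (le_maxTransport (hx.spread hT))

lemma div_mul_sum_le_average_maxTransport {w : Fin n → Fin m → ℝ} (hw : ∀ i j, 0 ≤ w i j)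
    {p : Fin m → ℝ} {x : Fin n → Fin m → ℝ} (hx : IsTransportPlan_s19 p univ x)
    {k : ℕ} (hk : 1 ≤ k) (hkn : k ≤ n) :
    (k / n : ℝ) * ∑ i, ∑ j, w i j * x i j ≤
      (∑ T ∈ univ.powersetCard k, maxTransport n m w p T) / n.choose k := by
  have hc : (0 : ℝ) < n.choose k := by exact_mod_cast Nat.choose_pos hkn
  have hsum := sum_powersetCard_sum univ hk fun i => ∑ j, w i j * x i j
  rw [card_univ, Fintype.card_fin, nsmul_eq_mul] at hsum
  rw [← choose_pred_div_choose hk hkn, div_mul_eq_mul_div, ← hsum]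
  refine div_le_div_of_nonneg_right (sum_le_sum fun T hT => ?_) hc.le
  refine sum_le_maxTransport_of_isTransportPlan_univ hw hx (card_pos.mp ?_)
  rw [(mem_powersetCard.mp hT).2]
  exact hk

lemma div_mul_maxTransport_univ_le_average (hn : 0 < n) {w : Fin n → Fin m → ℝ}
    (hw : ∀ i j, 0 ≤ w i j) {p : Fin m → ℝ} (hp : ∀ j, 0 ≤ p j) (hpsum : ∑ j, p j = 1)
    {k : ℕ} (hk : 1 ≤ k) (hkn : k ≤ n) :
    (k / n : ℝ) * maxTransport n m w p univ ≤
      (∑ T ∈ univ.powersetCard k, maxTransport n m w p T) / n.choose k := by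
  have hkn0 : (0 : ℝ) < k / n := by positivity
  rw [← le_div_iff₀' hkn0]
  refine maxTransport_le ⟨_, isTransportPlan_uniform hn hp hpsum⟩ fun x hx => ?_
  rw [le_div_iff₀' hkn0]
  exact div_mul_sum_le_average_maxTransport hw hx hk hkn

end Transport

section Matching

variable {n m : ℕ}

lemma exists_perm_maxPerfMatch_eq (w : Fin n → Fin m → ℝ) (req : Fin n → Fin m) :
    ∃ σ : Equiv.Perm (Fin n), maxPerfMatch n m w req = ∑ i, w i (req (σ i)) := by
  set S := {c : ℝ | ∃ π : Fin n ≃ Fin n, c = ∑ a, w (π a) (req a)}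
  have hS : S.Finite := (Set.finite_range fun π : Fin n ≃ Fin n => ∑ a, w (π a) (req a)).subset
    (by rintro c ⟨π, rfl⟩; exact ⟨π, rfl⟩)
  have hne : S.Nonempty := ⟨_, Equiv.refl _, rfl⟩
  obtain ⟨π, hπ⟩ := hne.csSup_mem hS
  refine ⟨π.symm, hπ.trans ?_⟩
  rw [← Equiv.sum_comp π fun i => w i (req (π.symm i))]
  simp

/-- Server `i` serves request `σ req i`; the entry `(i, j)` is `P(server i serves type j) / n`. -/
noncomputable def matchingPlan (p : Fin m → ℝ) (σ : (Fin n → Fin m) → Equiv.Perm (Fin n))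
    (i : Fin n) (j : Fin m) : ℝ :=
  (∑ req : Fin n → Fin m, (∏ a, p (req a)) * if req (σ req i) = j then 1 else 0) / n

lemma isTransportPlan_matchingPlan (hn : 0 < n) {p : Fin m → ℝ} (hp : ∀ j, 0 ≤ p j)
    (hpsum : ∑ j, p j = 1) (σ : (Fin n → Fin m) → Equiv.Perm (Fin n)) :
    IsTransportPlan_s19 p univ (matchingPlan p σ) where
  nonneg i j := div_nonneg (sum_nonneg fun req _ => mul_nonneg
    (prod_nonneg fun a _ => hp _) (by split_ifs <;> norm_num)) (Nat.cast_nonneg n)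
  row_sum i _ := by
    simp only [matchingPlan, ← sum_div, card_univ, Fintype.card_fin]
    rw [sum_comm]
    simp [← Fintype.sum_pow, hpsum]
  col_sum j := by
    have hn0 : (n : ℝ) ≠ 0 := by positivity
    simp only [matchingPlan, ← sum_div]
    rw [sum_comm, div_eq_iff hn0]
    calc ∑ req : Fin n → Fin m, ∑ i, (∏ a, p (req a)) * (if req (σ req i) = j then 1 else 0)
        = ∑ req : Fin n → Fin m, ∑ a, (∏ b, p (req b)) * (if req a = j then 1 else 0) :=
          sum_congr rfl fun req _ =>
            Equiv.sum_comp (σ req) fun a => (∏ b, p (req b)) * if req a = j then 1 else 0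
      _ = ∑ _a : Fin n, p j := by
          rw [sum_comm]
          simp_rw [Fintype.sum_prod_mul_apply hpsum _ fun j' => if j' = j then (1 : ℝ) else 0]
          simp
      _ = p j * n := by simp [mul_comm]

lemma sum_mul_matchingPlan (w : Fin n → Fin m → ℝ) (p : Fin m → ℝ)
    (σ : (Fin n → Fin m) → Equiv.Perm (Fin n)) :
    ∑ i, ∑ j, w i j * matchingPlan p σ i j =
      (∑ req : Fin n → Fin m, (∏ a, p (req a)) * ∑ i, w i (req (σ req i))) / n := by
  simp only [matchingPlan, mul_div_assoc', ← sum_div, mul_sum]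
  congr 1
  calc ∑ i, ∑ j, ∑ req : Fin n → Fin m,
        w i j * ((∏ a, p (req a)) * if req (σ req i) = j then 1 else 0)
      = ∑ i, ∑ req : Fin n → Fin m, (∏ a, p (req a)) * w i (req (σ req i)) :=
        sum_congr rfl fun i _ => by
          rw [sum_comm]
          exact sum_congr rfl fun req _ => by simp [mul_ite, mul_comm]
    _ = _ := sum_comm

lemma expected_maxPerfMatch_le (hn : 0 < n) (w : Fin n → Fin m → ℝ) {p : Fin m → ℝ}
    (hp : ∀ j, 0 ≤ p j) (hpsum : ∑ j, p j = 1) :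
    ∑ req : Fin n → Fin m, (∏ a, p (req a)) * maxPerfMatch n m w req ≤
      n * maxTransport n m w p univ := by
  choose σ hσ using exists_perm_maxPerfMatch_eq w
  have hplan := le_maxTransport (w := w) (isTransportPlan_matchingPlan hn hp hpsum σ)
  rw [sum_mul_matchingPlan, div_le_iff₀' (by positivity)] at hplan
  simpa only [hσ] using hplan

end Matching

/-- For max-weight perfect matching under i.i.d. arrivals, the fair-bias algorithm —
whose expected weight equals `∑_{k=1}^n E_{S_k ~ U_k}[M(S_k)]` by the structure lemma —
achieves at least half of the expected offline optimum `E[OPT]`. -/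
theorem stmt_19 (n m : ℕ) (hn : 0 < n) (w : Fin n → Fin m → ℝ)
    (hw : ∀ i j, 0 ≤ w i j) (p : Fin m → ℝ) (hp : ∀ j, 0 ≤ p j)
    (hpsum : ∑ j, p j = 1) :
    (1 / 2) * (∑ req : Fin n → Fin m,
        (∏ a : Fin n, p (req a)) * maxPerfMatch n m w req) ≤
      ∑ k ∈ Finset.Icc 1 n,
        (∑ T ∈ Finset.univ.powersetCard k, maxTransport n m w p T) /
          (n.choose k : ℝ) := by
  set M := maxTransport n m w p univ
  calc 1 / 2 * ∑ req : Fin n → Fin m, (∏ a, p (req a)) * maxPerfMatch n m w req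
      ≤ 1 / 2 * (n * M) := by gcongr; exact expected_maxPerfMatch_le hn w hp hpsum
    _ ≤ ∑ k ∈ Icc 1 n, (k / n : ℝ) * M := by
        rw [← sum_mul, ← mul_assoc]
        exact mul_le_mul_of_nonneg_right (half_mul_le_sum_Icc_div n)
          (maxTransport_univ_nonneg hn hw hp hpsum)
    _ ≤ _ := sum_le_sum fun k hk =>
        div_mul_maxTransport_univ_le_average hn hw hp hpsum (mem_Icc.mp hk).1 (mem_Icc.mp hk).2
end
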